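/- arXiv:2502.17379 — 5 statements merged into one kernel-verified Lean document; each statement's English description precedes it below -/
import Mathlib

section
/- Let (I, ·, φ₁, φ₂) be a generalized Cartan datum and fix a pair i₊ ≠ i₋ in I with φ₁(i₊) = φ₁(i₋), φ₂(i₊) = φ₂(i₋) = 0 and i₊·i₋ ≠ 0. Then the edge contraction (Î, ·, φ̂₁, φ̂₂) is again a generalized Cartan datum; that is: φ̂₂(i₀) = −(i₊·i₋)/φ₁(i₊) − 1 is a natural number, i₀·i₀ = 2(φ̂₁(i₀) − φ̂₁(i₀)·φ̂₂(i₀)), and for all distinct x, y ∈ Î the quotient (x·y)/φ̂₁(x) is a non-positive integer. -/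
/-- A generalized Cartan datum on a finite set `I`: a symmetric `ℤ`-valued bilinear form on
`ℤ[I]` (determined by its values `c i j` on generators), together with functions
`φ₁ : I → ℕ∖{0}` and `φ₂ : I → ℕ` satisfying the two axioms. -/
structure GenCartanDatum (I : Type*) [Fintype I] where
  c : I → I → ℤ
  phi1 : I → ℕ
  phi2 : I → ℕ
  phi1_pos : ∀ i, 0 < phi1 i
  symm : ∀ i j, c i j = c j i
  diag : ∀ i, c i i = 2 * ((phi1 i : ℤ) - (phi1 i : ℤ) * (phi2 i : ℤ))
  offdiag : ∀ i j, i ≠ j → ∃ n : ℕ, c i j = -((phi1 i : ℤ) * n)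

/-- Let `(I, ·, φ₁, φ₂)` be a generalized Cartan datum and fix a pair
`i₊ ≠ i₋` in `I` with `φ₁(i₊) = φ₁(i₋)`, `φ₂(i₊) = φ₂(i₋) = 0` and `i₊·i₋ ≠ 0`.  Then the edge
contraction `(Î, ·, φ̂₁, φ̂₂)` (where `Î = (I ∖ {i₊,i₋}) ∪ {i₀}`, `i₀ = i₊ + i₋`, the form is
restricted from `ℤ[I]`, `φ̂₁(i₀) = φ₁(i₊)` and `φ̂₂(i₀) = −(i₊·i₋)/φ₁(i₊) − 1`) is again a
generalized Cartan datum:  `φ̂₂(i₀)` is a natural number `m0` (i.e. `i₊·i₋ = −φ₁(i₊)(m0+1)`),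
the diagonal identity `i₀·i₀ = 2(φ̂₁(i₀) − φ̂₁(i₀)φ̂₂(i₀))` holds (here
`i₀·i₀ = i₊·i₊ + 2 i₊·i₋ + i₋·i₋` and `i₀·j = i₊·j + i₋·j`), and for all distinct elements
`x ≠ y` of `Î` the quotient `(x·y)/φ̂₁(x)` is a non-positive integer. -/
theorem stmt0 {I : Type*} [Fintype I] (D : GenCartanDatum I) (ip im : I)
    (hne : ip ≠ im) (h1 : D.phi1 ip = D.phi1 im)
    (h2p : D.phi2 ip = 0) (h2m : D.phi2 im = 0) (hc : D.c ip im ≠ 0) :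
    ∃ m0 : ℕ,
      -- `φ̂₂(i₀) = −(i₊·i₋)/φ₁(i₊) − 1` is the natural number `m0`
      D.c ip im = -((D.phi1 ip : ℤ) * ((m0 : ℤ) + 1)) ∧
      -- condition (1) for the new point `i₀ = i₊ + i₋`, with `φ̂₁(i₀) = φ₁(i₊)`,
      -- `φ̂₂(i₀) = m0`
      (D.c ip ip + 2 * D.c ip im + D.c im im
        = 2 * ((D.phi1 ip : ℤ) - (D.phi1 ip : ℤ) * (m0 : ℤ))) ∧
      -- condition (2) for pairs `(i₀, j)` and `(j, i₀)` with `j ∈ Î ∖ {i₀}`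
      (∀ j, j ≠ ip → j ≠ im →
        (∃ n : ℕ, D.c ip j + D.c im j = -((D.phi1 ip : ℤ) * n)) ∧
        (∃ n : ℕ, D.c j ip + D.c j im = -((D.phi1 j : ℤ) * n))) ∧
      -- condition (2) for pairs of old distinct elements of `Î ∖ {i₀}`
      (∀ i j, i ≠ ip → i ≠ im → j ≠ ip → j ≠ im → i ≠ j →
        ∃ n : ℕ, D.c i j = -((D.phi1 i : ℤ) * n)) := by
  obtain ⟨n, hn⟩ := D.offdiag ip im hne
  have hn0 : n ≠ 0 := by rintro rfl; simp at hn; exact hc hn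
  obtain ⟨m0, rfl⟩ := Nat.exists_eq_succ_of_ne_zero hn0
  refine ⟨m0, by push_cast at hn ⊢; linarith, ?_, ?_, ?_⟩
  · have dp := D.diag ip
    have dm := D.diag im
    rw [h2p] at dp; rw [h2m] at dm
    push_cast at hn
    rw [dp, dm, hn, ← h1]; push_cast; ring
  · intro j hjp hjm
    constructor
    · obtain ⟨a, ha⟩ := D.offdiag ip j (Ne.symm hjp)
      obtain ⟨b, hb⟩ := D.offdiag im j (Ne.symm hjm)
      exact ⟨a + b, by rw [ha, hb, ← h1]; push_cast; ring⟩
    · obtain ⟨a, ha⟩ := D.offdiag j ip hjp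
      obtain ⟨b, hb⟩ := D.offdiag j im hjm
      exact ⟨a + b, by rw [ha, hb]; push_cast; ring⟩
  · intro i j _ _ _ _ hij
    exact D.offdiag i j hij
end

section
/- The induced automorphism â of the contracted graph (𝐈̂, Ω̂) is admissible; i.e., â(h)′ = â(h′) and â(h)″ = â(h″) for every edge h ∈ Ω̂ (including the new composite edges l₁h_k and h̄_k l₂), and for every edge h ∈ Ω̂ with h′ ≠ h″ the endpoints do not lie in a common â-orbit. -/
/-- `x` and `y` lie in one orbit of the permutation `a`. -/
def inOrbit {α : Type*} (a : Equiv.Perm α) (x y : α) : Prop := ∃ n : ℤ, (a ^ n) x = y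

section Helpers


variable {α : Type*}

lemma inOrbit_iff_sameCycle {a : Equiv.Perm α} {x y : α} :
    inOrbit a x y ↔ a.SameCycle x y := Iff.rfl

lemma inOrbit.refl (a : Equiv.Perm α) (x : α) : inOrbit a x x := ⟨0, by simp⟩

lemma inOrbit.of_eq {a : Equiv.Perm α} {x y : α} (h : x = y) : inOrbit a x y :=
  ⟨0, by simpa using h⟩

lemma inOrbit.symm {a : Equiv.Perm α} {x y : α} (h : inOrbit a x y) : inOrbit a y x :=
  Equiv.Perm.SameCycle.symm h

lemma inOrbit.trans {a : Equiv.Perm α} {x y z : α} (h : inOrbit a x y)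
    (h' : inOrbit a y z) : inOrbit a x z := Equiv.Perm.SameCycle.trans h h'

lemma inOrbit_apply_right {a : Equiv.Perm α} {x y : α} :
    inOrbit a x (a y) ↔ inOrbit a x y := Equiv.Perm.sameCycle_apply_right

lemma inOrbit_zpow_right (a : Equiv.Perm α) (x : α) (n : ℤ) : inOrbit a x ((a ^ n) x) :=
  ⟨n, rfl⟩

lemma orbit_set_eq {a : Equiv.Perm α} {x y : α} (h : inOrbit a x y) :
    {v | inOrbit a x v} = {v | inOrbit a y v} :=
  Set.ext fun _ => ⟨fun hv => h.symm.trans hv, fun hv => h.trans hv⟩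

lemma card_inOrbit_eq [Fintype α] (a : Equiv.Perm α) (x : α) :
    Nat.card {v // inOrbit a x v} = Function.minimalPeriod (a • ·) x := by
  classical
  have hset : {v | inOrbit a x v} = MulAction.orbit (Subgroup.zpowers a) x := by
    ext v
    constructor
    · rintro ⟨n, rfl⟩
      exact ⟨⟨a ^ n, n, rfl⟩, rfl⟩
    · rintro ⟨⟨g, n, rfl⟩, rfl⟩
      exact ⟨n, rfl⟩
  letI : Fintype (MulAction.orbit (Subgroup.zpowers a) x) :=
    Set.Finite.fintype (Set.toFinite _)
  calc Nat.card {v // inOrbit a x v}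
      = Nat.card (MulAction.orbit (Subgroup.zpowers a) x) :=
        Nat.card_congr (Equiv.setCongr hset)
    _ = Fintype.card (MulAction.orbit (Subgroup.zpowers a) x) := Nat.card_eq_fintype_card
    _ = Function.minimalPeriod (a • ·) x := (MulAction.minimalPeriod_eq_card _ _).symm

lemma zpow_fix_iff [Fintype α] (a : Equiv.Perm α) (x : α) (n : ℤ) :
    (a ^ n) x = x ↔ (Nat.card {v // inOrbit a x v} : ℤ) ∣ n := by
  rw [card_inOrbit_eq]
  exact MulAction.zpow_smul_eq_iff_minimalPeriod_dvd (a := a) (b := x)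

lemma comm_zpow {V E : Type*} (src : E → V) (aV : Equiv.Perm V) (aE : Equiv.Perm E)
    (comm : ∀ h, src (aE h) = aV (src h)) (n : ℤ) (e : E) :
    src ((aE ^ n) e) = (aV ^ n) (src e) := by
  have hinv : ∀ h, src (aE⁻¹ h) = aV⁻¹ (src h) := by
    intro h
    have := comm (aE⁻¹ h)
    rw [← Equiv.Perm.mul_apply, mul_inv_cancel, Equiv.Perm.one_apply] at this
    rw [this, ← Equiv.Perm.mul_apply, inv_mul_cancel, Equiv.Perm.one_apply]
  induction n using Int.induction_on generalizing e with
  | zero => simp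
  | succ m ih =>
      rw [zpow_add_one, zpow_add_one, Equiv.Perm.mul_apply, Equiv.Perm.mul_apply, ih, comm]
  | pred m ih =>
      rw [zpow_sub_one, zpow_sub_one, Equiv.Perm.mul_apply, Equiv.Perm.mul_apply, ih, hinv]

end Helpers

variable {V E : Type*}

/-- The source map of the contracted edge set.  An edge of the contracted graph is either an
old edge (not incident to `[i₋]`), a composite `l₁h_k` (encoded `Sum.inr (Sum.inl (h_k, l₁))`)
with source `h_k′`, or a composite `h̄_k l₂` (encoded `Sum.inr (Sum.inr (h_k, l₂))`) with
source `l₂′`. -/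
def srcHat (src : E → V) : E ⊕ (E × E) ⊕ (E × E) → V
  | Sum.inl h => src h
  | Sum.inr (Sum.inl (k, _)) => src k
  | Sum.inr (Sum.inr (_, l)) => src l

/-- The target map of the contracted edge set: an old edge keeps its target, the composite
`l₁h_k` has target `l₁″`, and the composite `h̄_k l₂` has target `h_k′`. -/
def tgtHat (src tgt : E → V) : E ⊕ (E × E) ⊕ (E × E) → V
  | Sum.inl h => tgt h
  | Sum.inr (Sum.inl (_, l)) => tgt l
  | Sum.inr (Sum.inr (k, _)) => src k

/-- The predicate carving the edge set `Ω̂` of the contracted graph out of the ambient sum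
type: old edges not incident to `[i₋]`; pairs `(h_k, l₁)` with `h_k` in the `a`-orbit of the
fixed edge `e₀` and `l₁′ = h_k″`; and pairs `(h_k, l₂)` with `l₂″ = h_k″`, `l₂ ≠ h_k`. -/
def PHat (src tgt : E → V) (aV : Equiv.Perm V) (aE : Equiv.Perm E) (im : V) (e0 : E) :
    E ⊕ (E × E) ⊕ (E × E) → Prop
  | Sum.inl h => ¬ inOrbit aV im (src h) ∧ ¬ inOrbit aV im (tgt h)
  | Sum.inr (Sum.inl (k, l)) => inOrbit aE e0 k ∧ src l = tgt k
  | Sum.inr (Sum.inr (k, l)) => inOrbit aE e0 k ∧ tgt l = tgt k ∧ l ≠ k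

/-- The induced automorphism on the ambient contracted edge set:
`â(h) = a(h)`, `â(l₁h_k) = a(l₁)a(h_k)`, `â(h̄_k l₂) = \overline{a(h_k)} a(l₂)`. -/
def aRaw (aE : Equiv.Perm E) : E ⊕ (E × E) ⊕ (E × E) → E ⊕ (E × E) ⊕ (E × E)
  | Sum.inl h => Sum.inl (aE h)
  | Sum.inr (Sum.inl (k, l)) => Sum.inr (Sum.inl (aE k, aE l))
  | Sum.inr (Sum.inr (k, l)) => Sum.inr (Sum.inr (aE k, aE l))

/-- The induced automorphism `â` of the contracted graph `(𝐈̂, Ω̂)` is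
admissible: `â` maps `Ω̂` to itself, `â(h)′ = â(h′)` and `â(h)″ = â(h″)` for every edge
`h ∈ Ω̂` (including the composite edges), and for every `h ∈ Ω̂` with `h′ ≠ h″` the two
endpoints of `h` do not lie in a common `â`-orbit (equivalently, a common `a`-orbit, since
`𝐈̂ = 𝐈 − [i₋]` is `a`-stable and `â` is the restriction of `a`). -/
theorem stmt1 [Fintype V] [Fintype E] [Nonempty V]
    (src tgt : E → V) (aV : Equiv.Perm V) (aE : Equiv.Perm E)
    (comm_src : ∀ h, src (aE h) = aV (src h))
    (comm_tgt : ∀ h, tgt (aE h) = aV (tgt h))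
    (admissible : ∀ h : E, src h ≠ tgt h → ¬ inOrbit aV (src h) (tgt h))
    (ip im : V)
    (orb_ne : ¬ inOrbit aV ip im)
    (orb_card : Nat.card {v : V // inOrbit aV ip v} = Nat.card {v : V // inOrbit aV im v})
    (no_loops : ∀ h : E, src h = tgt h →
      ¬ (inOrbit aV ip (src h) ∨ inOrbit aV im (src h)))
    (no_share : ∀ h l : E, src h ≠ tgt h →
      (inOrbit aV ip (src h) ∨ inOrbit aV im (src h)) →
      (inOrbit aV ip (tgt h) ∨ inOrbit aV im (tgt h)) →
      (inOrbit aV ip (src l) ∨ inOrbit aV im (src l)) →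
      (inOrbit aV ip (tgt l) ∨ inOrbit aV im (tgt l)) →
      (src l = src h ∨ src l = tgt h) →
      (tgt l = src h ∨ tgt l = tgt h))
    (e0 : E) (he0s : inOrbit aV ip (src e0)) (he0t : inOrbit aV im (tgt e0)) :
    -- `â` preserves the contracted edge set `Ω̂`
    (∀ r, PHat src tgt aV aE im e0 r → PHat src tgt aV aE im e0 (aRaw aE r)) ∧
    -- `â(h)′ = â(h′)` on `Ω̂`
    (∀ r, PHat src tgt aV aE im e0 r → srcHat src (aRaw aE r) = aV (srcHat src r)) ∧
    -- `â(h)″ = â(h″)` on `Ω̂`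
    (∀ r, PHat src tgt aV aE im e0 r → tgtHat src tgt (aRaw aE r) = aV (tgtHat src tgt r)) ∧
    -- admissibility: the endpoints of an edge of `Ω̂` with distinct endpoints lie in
    -- different orbits
    (∀ r, PHat src tgt aV aE im e0 r → srcHat src r ≠ tgtHat src tgt r →
      ¬ inOrbit aV (srcHat src r) (tgtHat src tgt r)) := by
  classical
  have hE : ∀ (n : ℤ) (e : E), src ((aE ^ n) e) = (aV ^ n) (src e) :=
    comm_zpow src aV aE comm_src
  have hT : ∀ (n : ℤ) (e : E), tgt ((aE ^ n) e) = (aV ^ n) (tgt e) :=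
    comm_zpow tgt aV aE comm_tgt
  have hsrc_k : ∀ k, inOrbit aE e0 k → inOrbit aV ip (src k) := by
    rintro k ⟨n, rfl⟩
    rw [hE]
    exact he0s.trans ⟨n, rfl⟩
  have htgt_k : ∀ k, inOrbit aE e0 k → inOrbit aV im (tgt k) := by
    rintro k ⟨n, rfl⟩
    rw [hT]
    exact he0t.trans ⟨n, rfl⟩
  have cross : ∀ x y, inOrbit aV ip x → inOrbit aV im y → ¬ inOrbit aV x y :=
    fun _ _ hx hy hxy => orb_ne ((hx.trans hxy).trans hy.symm)
  refine ⟨?_, ?_, ?_, ?_⟩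
  · -- preservation
    intro r hr
    rcases r with h | ⟨k, l⟩ | ⟨k, l⟩ <;> simp only [PHat, aRaw] at hr ⊢
    · obtain ⟨h1, h2⟩ := hr
      exact ⟨fun c => h1 (by rwa [comm_src, inOrbit_apply_right] at c),
        fun c => h2 (by rwa [comm_tgt, inOrbit_apply_right] at c)⟩
    · obtain ⟨hk, hl⟩ := hr
      refine ⟨inOrbit_apply_right.mpr hk, ?_⟩
      rw [comm_src, comm_tgt, hl]
    · obtain ⟨hk, hl, hne⟩ := hr
      exact ⟨inOrbit_apply_right.mpr hk, by rw [comm_tgt, comm_tgt, hl],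
        fun c => hne (aE.injective c)⟩
  · -- src equivariance
    intro r _
    rcases r with h | ⟨k, l⟩ | ⟨k, l⟩ <;> simp only [srcHat, aRaw] <;> exact comm_src _
  · -- tgt equivariance
    intro r _
    rcases r with h | ⟨k, l⟩ | ⟨k, l⟩ <;> simp only [tgtHat, aRaw]
    · exact comm_tgt _
    · exact comm_tgt _
    · exact comm_src _
  · -- admissibility
    intro r hr hne
    rcases r with h | ⟨k, l⟩ | ⟨k, l⟩ <;>
      simp only [PHat, srcHat, tgtHat] at hr hne ⊢
    · exact admissible h hne
    · obtain ⟨hk, hl⟩ := hr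
      intro hc
      have hip_k : inOrbit aV ip (src k) := hsrc_k k hk
      have him_tk : inOrbit aV im (tgt k) := htgt_k k hk
      have hip_tl : inOrbit aV ip (tgt l) := hip_k.trans hc
      have him_sl : inOrbit aV im (src l) := by rw [hl]; exact him_tk
      have hll : src l ≠ tgt l := fun e => no_loops l e (Or.inr him_sl)
      have hkk : src k ≠ tgt k :=
        fun e => cross _ _ hip_k him_tk (inOrbit.of_eq e)
      rcases no_share k l hkk (Or.inl hip_k) (Or.inr him_tk) (Or.inr him_sl)
        (Or.inl hip_tl) (Or.inr hl) with h' | h'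
      · exact hne h'.symm
      · exact cross _ _ hip_tl (by rw [h']; exact him_tk) (inOrbit.refl aV _)
    · obtain ⟨hk, hlt, hlk⟩ := hr
      rintro ⟨n, hn⟩
      have hip_k : inOrbit aV ip (src k) := hsrc_k k hk
      have him_tk : inOrbit aV im (tgt k) := htgt_k k hk
      have hip_sl : inOrbit aV ip (src l) := hip_k.trans (inOrbit.symm ⟨n, hn⟩)
      have hsl' : src ((aE ^ n) l) = src k := by rw [hE]; exact hn
      have htl' : tgt ((aE ^ n) l) = (aV ^ n) (tgt k) := by rw [hT, hlt]
      have him_tl' : inOrbit aV im (tgt ((aE ^ n) l)) := by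
        rw [htl']; exact him_tk.trans ⟨n, rfl⟩
      have hkk : src k ≠ tgt k :=
        fun e => cross _ _ hip_k him_tk (inOrbit.of_eq e)
      rcases no_share k ((aE ^ n) l) hkk (Or.inl hip_k) (Or.inr him_tk)
        (Or.inl (by rw [hsl']; exact hip_k)) (Or.inr him_tl') (Or.inl hsl') with h' | h'
      · exact cross _ _ hip_k him_tl' (inOrbit.of_eq h'.symm)
      · have hfix : (aV ^ n) (tgt k) = tgt k := by rw [← htl']; exact h'
        have hdvd := (zpow_fix_iff aV (tgt k) n).mp hfix
        have hc1 : Nat.card {v // inOrbit aV (tgt k) v}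
            = Nat.card {v // inOrbit aV (src l) v} := by
          have e1 : {v | inOrbit aV (tgt k) v} = {v | inOrbit aV im v} :=
            (orbit_set_eq him_tk).symm
          have e2 : {v | inOrbit aV (src l) v} = {v | inOrbit aV ip v} :=
            (orbit_set_eq hip_sl).symm
          calc Nat.card {v // inOrbit aV (tgt k) v}
              = Nat.card {v : V // inOrbit aV im v} := Nat.card_congr (Equiv.setCongr e1)
            _ = Nat.card {v : V // inOrbit aV ip v} := orb_card.symm
            _ = Nat.card {v // inOrbit aV (src l) v} :=
                (Nat.card_congr (Equiv.setCongr e2)).symm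
        rw [hc1] at hdvd
        have hfix2 : (aV ^ n) (src l) = src l := (zpow_fix_iff aV (src l) n).mpr hdvd
        exact hne (hfix2.symm.trans hn)
end

section
/- Let Y = ℤ[I] with I = {i₊, i₋} and pairing ⟨i₊, i₊′⟩ = ⟨i₋, i₋′⟩ = 2, ⟨i₊, i₋′⟩ = ⟨i₋, i₊′⟩ = −3 (arising from the generalized Cartan datum with φ₁(i₊) = φ₁(i₋) = 2, φ₂ ≡ 0, i₊·i₋ = −6). Then the reflection s_{i₋ + 2i₊} : Y → Y, defined by y ↦ y − ⟨y, i₋′ + 2i₊′⟩(i₋ + 2i₊), does not belong to the Weyl group W_I, i.e., to the subgroup of Aut(Y) generated by s_{i₊} and s_{i₋}. -/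
/-- `⟨y, i₊′⟩ = 2y₁ − 3y₂` for `y ∈ Y = ℤ[I] = ℤ × ℤ` with basis `i₊ = (1,0)`, `i₋ = (0,1)`. -/
def pairPlus (y : ℤ × ℤ) : ℤ := 2 * y.1 - 3 * y.2

/-- `⟨y, i₋′⟩ = −3y₁ + 2y₂`. -/
def pairMinus (y : ℤ × ℤ) : ℤ := -3 * y.1 + 2 * y.2

/-- The reflection `s_{i₊} : y ↦ y − ⟨y, i₊′⟩ i₊`. -/
def sPlusFun (y : ℤ × ℤ) : ℤ × ℤ := y - pairPlus y • ((1 : ℤ), (0 : ℤ))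

/-- The reflection `s_{i₋} : y ↦ y − ⟨y, i₋′⟩ i₋`. -/
def sMinusFun (y : ℤ × ℤ) : ℤ × ℤ := y - pairMinus y • ((0 : ℤ), (1 : ℤ))

/-- The reflection `s_{i₋+2i₊} : y ↦ y − ⟨y, i₋′ + 2i₊′⟩ (i₋ + 2i₊)`. -/
def sMidFun (y : ℤ × ℤ) : ℤ × ℤ := y - (pairMinus y + 2 * pairPlus y) • ((2 : ℤ), (1 : ℤ))

lemma sPlus_invol : Function.Involutive sPlusFun := by
  rintro ⟨a, b⟩
  simp only [sPlusFun, pairPlus, Prod.smul_mk, smul_eq_mul, Prod.mk_sub_mk]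
  exact Prod.ext (by ring) (by ring)

lemma sMinus_invol : Function.Involutive sMinusFun := by
  rintro ⟨a, b⟩
  simp only [sMinusFun, pairMinus, Prod.smul_mk, smul_eq_mul, Prod.mk_sub_mk]
  exact Prod.ext (by ring) (by ring)

/-- `s_{i₊}` as a permutation of `Y`. -/
def sPlus : Equiv.Perm (ℤ × ℤ) := sPlus_invol.toPerm

/-- `s_{i₋}` as a permutation of `Y`. -/
def sMinus : Equiv.Perm (ℤ × ℤ) := sMinus_invol.toPerm

lemma key : ∀ w ∈ Subgroup.closure ({sPlus, sMinus} : Set (Equiv.Perm (ℤ × ℤ))),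
    (∀ y : ℤ × ℤ, ((w y).2 : ZMod 3) = (y.2 : ZMod 3)) ∨
    (∀ y : ℤ × ℤ, ((w y).2 : ZMod 3) = -(y.2 : ZMod 3)) := by
  intro w hw
  induction hw using Subgroup.closure_induction with
  | mem x hx =>
    rcases hx with h | h
    · left
      intro y
      subst h
      show (((sPlusFun y).2 : ℤ) : ZMod 3) = _
      simp [sPlusFun, pairPlus]
    · right
      intro y
      subst h
      show (((sMinusFun y).2 : ℤ) : ZMod 3) = _
      have : (sMinusFun y).2 = 3 * y.1 - y.2 := by
        simp [sMinusFun, pairMinus]; ring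
      rw [this]
      push_cast
      rw [show ((3:ZMod 3)) = 0 by decide]
      ring
  | one => left; intro y; rfl
  | mul a b _ _ ha hb =>
    rcases ha with ha | ha <;> rcases hb with hb | hb
    · left; intro y; rw [Equiv.Perm.mul_apply, ha, hb]
    · right; intro y; rw [Equiv.Perm.mul_apply, ha, hb]
    · right; intro y; rw [Equiv.Perm.mul_apply, ha, hb]
    · left; intro y; rw [Equiv.Perm.mul_apply, ha, hb, neg_neg]
  | inv a _ ha =>
    rcases ha with ha | ha
    · left; intro y
      have := ha (a⁻¹ y)
      simpa using this.symm
    · right; intro y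
      have := ha (a⁻¹ y)
      simp at this
      rw [this, Equiv.Perm.inv_def]; ring

/-- Let `Y = ℤ[I] = ℤ × ℤ` with `I = {i₊, i₋}`, `i₊ = (1,0)`,
`i₋ = (0,1)`, and the pairing determined by `⟨i₊,i₊′⟩ = ⟨i₋,i₋′⟩ = 2`,
`⟨i₊,i₋′⟩ = ⟨i₋,i₊′⟩ = −3` (coming from the generalized Cartan datum with
`φ₁(i₊) = φ₁(i₋) = 2`, `φ₂ ≡ 0`, `i₊·i₋ = −6`).  Then the reflection
`s_{i₋+2i₊} : y ↦ y − ⟨y, i₋′+2i₊′⟩(i₋+2i₊)` does not belong to the Weyl group `W_I`,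
the subgroup of `Aut Y` (realized inside the permutations of `Y`) generated by `s_{i₊}`
and `s_{i₋}`: no element of that subgroup equals `s_{i₋+2i₊}` as a function on `Y`. -/
theorem stmt5 :
    ∀ w : Equiv.Perm (ℤ × ℤ),
      w ∈ Subgroup.closure ({sPlus, sMinus} : Set (Equiv.Perm (ℤ × ℤ))) →
      ∃ y : ℤ × ℤ, w y ≠ sMidFun y := by
  intro w hw
  refine ⟨(1, 0), fun h => ?_⟩
  have h2 : (w (1, 0)).2 = (-1 : ℤ) := by
    rw [h]; simp [sMidFun, pairMinus, pairPlus]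
  rcases key w hw with hk | hk <;>
  · have := hk (1, 0)
    rw [h2] at this
    simp at this
end

section
/- Let Y = ℤ[I] with I = {i₊, i₋} and pairing ⟨i₊, i₊′⟩ = ⟨i₋, i₋′⟩ = 2, ⟨i₊, i₋′⟩ = ⟨i₋, i₊′⟩ = −3. Then for every element w of the subgroup of Aut(Y) generated by the reflections s_{i₊} and s_{i₋}, one has w(i₊) ≠ −i₊ − i₋; on the other hand, the reflection s_{i₋+2i₊} satisfies s_{i₋+2i₊}(i₊) = −i₊ − i₋. -/
/-- The invariant quadratic form `Q(a,b) = a² − 3ab + b²`. -/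
def Qform (y : ℤ × ℤ) : ℤ := y.1 ^ 2 - 3 * y.1 * y.2 + y.2 ^ 2

lemma Q_sPlus (y : ℤ × ℤ) : Qform (sPlus y) = Qform y := by
  obtain ⟨a, b⟩ := y
  simp only [sPlus, Function.Involutive.coe_toPerm, sPlusFun, pairPlus, Prod.smul_mk,
    smul_eq_mul, Prod.mk_sub_mk, Qform]
  ring

lemma Q_sMinus (y : ℤ × ℤ) : Qform (sMinus y) = Qform y := by
  obtain ⟨a, b⟩ := y
  simp only [sMinus, Function.Involutive.coe_toPerm, sMinusFun, pairMinus, Prod.smul_mk,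
    smul_eq_mul, Prod.mk_sub_mk, Qform]
  ring

lemma Q_closure (w : Equiv.Perm (ℤ × ℤ))
    (hw : w ∈ Subgroup.closure ({sPlus, sMinus} : Set (Equiv.Perm (ℤ × ℤ)))) :
    ∀ y, Qform (w y) = Qform y := by
  induction hw using Subgroup.closure_induction with
  | mem g hg =>
    rcases hg with rfl | rfl
    · exact Q_sPlus
    · exact Q_sMinus
  | one => intro y; rfl
  | mul g h _ _ hg hh => intro y; simp only [Equiv.Perm.mul_apply]; rw [hg, hh]
  | inv g hg ih =>
    intro y
    have := ih (g⁻¹ y)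
    simpa using this.symm

/-- Let `Y = ℤ[I] = ℤ × ℤ` with `I = {i₊, i₋}`, `i₊ = (1,0)`,
`i₋ = (0,1)`, and the pairing determined by `⟨i₊,i₊′⟩ = ⟨i₋,i₋′⟩ = 2`,
`⟨i₊,i₋′⟩ = ⟨i₋,i₊′⟩ = −3`.  Then for every element `w` of the subgroup of the
automorphisms (permutations) of `Y` generated by the reflections `s_{i₊}` and `s_{i₋}`
one has `w(i₊) ≠ −i₊ − i₋`, while the reflection `s_{i₋+2i₊}` satisfies
`s_{i₋+2i₊}(i₊) = −i₊ − i₋`. -/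
theorem stmt6 :
    (∀ w : Equiv.Perm (ℤ × ℤ),
      w ∈ Subgroup.closure ({sPlus, sMinus} : Set (Equiv.Perm (ℤ × ℤ))) →
      w ((1 : ℤ), (0 : ℤ)) ≠ ((-1 : ℤ), (-1 : ℤ))) ∧
    sMidFun ((1 : ℤ), (0 : ℤ)) = ((-1 : ℤ), (-1 : ℤ)) := by
  constructor
  · intro w hw h
    have h1 := Q_closure w hw ((1 : ℤ), (0 : ℤ))
    rw [h] at h1
    norm_num [Qform] at h1
  · simp only [sMidFun, pairMinus, pairPlus]
    norm_num
end

section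
/- In the extended restriction diagram on twisted-Frobenius fixed points, whose rows are (E_𝐕^𝐅 ← S_𝐖^𝐅 → E_𝐓^𝐅 × E_𝐖^𝐅), (E_𝐕^{♥,𝐅} ← S_𝐖^{♥,𝐅} → E_𝐓^{♥,𝐅} × E_𝐖^{♥,𝐅}) and (E_𝐕̂^{𝐅̂} ← S_𝐖̂^{𝐅̂} → E_𝐓̂^{𝐅̂} × E_𝐖̂^{𝐅̂}), with upward vertical maps the inclusions j and downward vertical maps the contraction maps μ, all four squares commute; moreover the two top squares are Cartesian squares of sets: S_𝐖^{♥,𝐅} is the fiber product of S_𝐖^𝐅 and E_𝐕^{♥,𝐅} over E_𝐕^𝐅, and S_𝐖^{♥,𝐅} is the fiber product of S_𝐖^𝐅 and E_𝐓^{♥,𝐅} × E_𝐖^{♥,𝐅} over E_𝐓^𝐅 × E_𝐖^𝐅. -/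
noncomputable section

lemma inOrbit_refl {α : Type*} (a : Equiv.Perm α) (x : α) : inOrbit a x x :=
  ⟨0, by simp⟩

lemma inOrbit_apply {α : Type*} (a : Equiv.Perm α) (x y : α) :
    inOrbit a x (a y) ↔ inOrbit a x y := by
  constructor
  · rintro ⟨n, h⟩
    refine ⟨-1 + n, ?_⟩
    have hh : (a ^ (-1 + n : ℤ)) x = a⁻¹ ((a ^ n) x) := by
      rw [zpow_add, Equiv.Perm.mul_apply, zpow_neg_one]
    rw [hh, h, ← Equiv.Perm.mul_apply, inv_mul_cancel, Equiv.Perm.one_apply]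
  · rintro ⟨n, h⟩
    refine ⟨1 + n, ?_⟩
    rw [zpow_add, Equiv.Perm.mul_apply, h, zpow_one]

lemma inOrbit_symm {α : Type*} {a : Equiv.Perm α} {x y : α} (h : inOrbit a x y) :
    inOrbit a y x := by
  obtain ⟨n, h⟩ := h
  refine ⟨-n, ?_⟩
  rw [← h, ← Equiv.Perm.mul_apply, ← zpow_add, neg_add_cancel, zpow_zero,
    Equiv.Perm.one_apply]

lemma inOrbit_trans {α : Type*} {a : Equiv.Perm α} {x y z : α}
    (h1 : inOrbit a x y) (h2 : inOrbit a y z) : inOrbit a x z := by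
  obtain ⟨n, h1⟩ := h1; obtain ⟨m, h2⟩ := h2
  exact ⟨m + n, by rw [zpow_add, Equiv.Perm.mul_apply, h1, h2]⟩

/-- A finite oriented graph (loops allowed) together with a pair of bijections commuting
with the source and target maps (an automorphism of the oriented graph). -/
structure PreGraph where
  V : Type
  E : Type
  [fv : Fintype V]
  [fe : Fintype E]
  nonemptyV : Nonempty V
  src : E → V
  tgt : E → V
  aV : Equiv.Perm V
  aE : Equiv.Perm E
  comm_src : ∀ h, src (aE h) = aV (src h)
  comm_tgt : ∀ h, tgt (aE h) = aV (tgt h)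

attribute [instance] PreGraph.fv PreGraph.fe

namespace PreGraph

variable (Q : PreGraph)

lemma comm_src_inv (h : Q.E) : Q.src (Q.aE⁻¹ h) = Q.aV⁻¹ (Q.src h) := by
  have := Q.comm_src (Q.aE⁻¹ h)
  rw [← Equiv.Perm.mul_apply, mul_inv_cancel, Equiv.Perm.one_apply] at this
  rw [this, ← Equiv.Perm.mul_apply, inv_mul_cancel, Equiv.Perm.one_apply]

lemma comm_tgt_inv (h : Q.E) : Q.tgt (Q.aE⁻¹ h) = Q.aV⁻¹ (Q.tgt h) := by
  have := Q.comm_tgt (Q.aE⁻¹ h)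
  rw [← Equiv.Perm.mul_apply, mul_inv_cancel, Equiv.Perm.one_apply] at this
  rw [this, ← Equiv.Perm.mul_apply, inv_mul_cancel, Equiv.Perm.one_apply]

lemma comm_src_zpow (n : ℤ) (h : Q.E) :
    Q.src ((Q.aE ^ n) h) = (Q.aV ^ n) (Q.src h) := by
  induction n using Int.induction_on generalizing h with
  | zero => simp
  | succ k ih =>
      rw [zpow_add_one, Equiv.Perm.mul_apply, ih, Q.comm_src, ← Equiv.Perm.mul_apply,
        ← zpow_add_one]
  | pred k ih =>
      rw [zpow_sub_one, Equiv.Perm.mul_apply, ih, Q.comm_src_inv, ← Equiv.Perm.mul_apply,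
        ← zpow_sub_one]

lemma comm_tgt_zpow (n : ℤ) (h : Q.E) :
    Q.tgt ((Q.aE ^ n) h) = (Q.aV ^ n) (Q.tgt h) := by
  induction n using Int.induction_on generalizing h with
  | zero => simp
  | succ k ih =>
      rw [zpow_add_one, Equiv.Perm.mul_apply, ih, Q.comm_tgt, ← Equiv.Perm.mul_apply,
        ← zpow_add_one]
  | pred k ih =>
      rw [zpow_sub_one, Equiv.Perm.mul_apply, ih, Q.comm_tgt_inv, ← Equiv.Perm.mul_apply,
        ← zpow_sub_one]

end PreGraph
/-- The contraction setup: a finite oriented graph with admissible automorphism `a`,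
two distinct `a`-orbits `[i₊] ≠ [i₋]` of equal size, with no loops at their vertices, such
that no two edges with endpoints in `[i₊] ∪ [i₋]` and distinct endpoints share exactly one
endpoint, together with a fixed edge `e₀` from `[i₊]` to `[i₋]`. -/
structure CSetup extends PreGraph where
  admissible : ∀ h, src h ≠ tgt h → ¬ inOrbit aV (src h) (tgt h)
  ip : V
  im : V
  orb_ne : ¬ inOrbit aV ip im
  orb_card : Nat.card {v : V // inOrbit aV ip v} = Nat.card {v : V // inOrbit aV im v}
  no_loops : ∀ h, src h = tgt h → ¬ (inOrbit aV ip (src h) ∨ inOrbit aV im (src h))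
  no_share : ∀ h l, src h ≠ tgt h →
      (inOrbit aV ip (src h) ∨ inOrbit aV im (src h)) →
      (inOrbit aV ip (tgt h) ∨ inOrbit aV im (tgt h)) →
      (inOrbit aV ip (src l) ∨ inOrbit aV im (src l)) →
      (inOrbit aV ip (tgt l) ∨ inOrbit aV im (tgt l)) →
      (src l = src h ∨ src l = tgt h) →
      (tgt l = src h ∨ tgt l = tgt h)
  e0 : E
  e0_src : inOrbit aV ip (src e0)
  e0_tgt : inOrbit aV im (tgt e0)

namespace CSetup

variable (C : CSetup)

lemma ip_not_im {v : C.V} (h : inOrbit C.aV C.ip v) : ¬ inOrbit C.aV C.im v :=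
  fun h' => C.orb_ne (inOrbit_trans h (inOrbit_symm h'))

lemma im_not_ip {v : C.V} (h : inOrbit C.aV C.im v) : ¬ inOrbit C.aV C.ip v :=
  fun h' => C.orb_ne (inOrbit_trans h' (inOrbit_symm h))

/-- `h_k` ranges over the `a`-orbit of the fixed edge `e₀`. -/
def isHK (k : C.E) : Prop := inOrbit C.aE C.e0 k

lemma hk_src {k : C.E} (h : C.isHK k) : inOrbit C.aV C.ip (C.src k) := by
  obtain ⟨n, rfl⟩ := h
  rw [C.comm_src_zpow]
  obtain ⟨m, hm⟩ := C.e0_src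
  exact ⟨n + m, by rw [zpow_add, Equiv.Perm.mul_apply, hm]⟩

lemma hk_tgt {k : C.E} (h : C.isHK k) : inOrbit C.aV C.im (C.tgt k) := by
  obtain ⟨n, rfl⟩ := h
  rw [C.comm_tgt_zpow]
  obtain ⟨m, hm⟩ := C.e0_tgt
  exact ⟨n + m, by rw [zpow_add, Equiv.Perm.mul_apply, hm]⟩

/-- An edge whose source lies in `[i₋]` has its target outside `[i₋]`. -/
lemma tgt_escapes {l : C.E} (h : inOrbit C.aV C.im (C.src l)) :
    ¬ inOrbit C.aV C.im (C.tgt l) := by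
  intro h'
  by_cases hst : C.src l = C.tgt l
  · exact C.no_loops l hst (Or.inr h)
  · exact C.admissible l hst (inOrbit_trans (inOrbit_symm h) h')

/-- An edge whose target lies in `[i₋]` has its source outside `[i₋]`, unless it is a loop;
but loops at `[i₋]` are excluded, so the source is outside `[i₋]`. -/
lemma src_escapes {l : C.E} (h : inOrbit C.aV C.im (C.tgt l)) :
    ¬ inOrbit C.aV C.im (C.src l) := by
  intro h'
  by_cases hst : C.src l = C.tgt l
  · exact C.no_loops l hst (Or.inr h')
  · exact C.admissible l hst (inOrbit_trans (inOrbit_symm h') h)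

/-- The predicate carving the contracted edge set `Ω̂` out of the ambient sum type:
old edges not incident to `[i₋]`, composites `l₁h_k` (with `l₁′ = h_k″`), and composites
`h̄_k l₂` (with `l₂″ = h_k″`, `l₂ ≠ h_k`). -/
def PHat : C.E ⊕ (C.E × C.E) ⊕ (C.E × C.E) → Prop
  | Sum.inl h => ¬ inOrbit C.aV C.im (C.src h) ∧ ¬ inOrbit C.aV C.im (C.tgt h)
  | Sum.inr (Sum.inl (k, l)) => C.isHK k ∧ C.src l = C.tgt k
  | Sum.inr (Sum.inr (k, l)) => C.isHK k ∧ C.tgt l = C.tgt k ∧ l ≠ k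

/-- The vertex set `𝐈̂ = 𝐈 − [i₋]` of the contracted graph. -/
def VHat : Type := {v : C.V // ¬ inOrbit C.aV C.im v}

/-- The edge set `Ω̂` of the contracted graph. -/
def EHat : Type := {r : C.E ⊕ (C.E × C.E) ⊕ (C.E × C.E) // C.PHat r}

instance : Fintype C.VHat := by
  classical exact (Subtype.fintype _)

instance : Fintype C.EHat := by
  classical exact (Subtype.fintype _)

instance : Nonempty C.VHat := ⟨⟨C.ip, C.ip_not_im (inOrbit_refl _ _)⟩⟩

/-- The source map of the contracted graph. -/
def srcHat : C.EHat → C.VHat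
  | ⟨Sum.inl h, pf⟩ => ⟨C.src h, pf.1⟩
  | ⟨Sum.inr (Sum.inl (k, _)), pf⟩ => ⟨C.src k, C.ip_not_im (C.hk_src pf.1)⟩
  | ⟨Sum.inr (Sum.inr (k, l)), pf⟩ =>
      ⟨C.src l, C.src_escapes (pf.2.1 ▸ C.hk_tgt pf.1)⟩

/-- The target map of the contracted graph. -/
def tgtHat : C.EHat → C.VHat
  | ⟨Sum.inl h, pf⟩ => ⟨C.tgt h, pf.2⟩
  | ⟨Sum.inr (Sum.inl (k, l)), pf⟩ =>
      ⟨C.tgt l, C.tgt_escapes (pf.2 ▸ C.hk_tgt pf.1)⟩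
  | ⟨Sum.inr (Sum.inr (k, _)), pf⟩ => ⟨C.src k, C.ip_not_im (C.hk_src pf.1)⟩

/-- The vertex part of the induced automorphism `â`. -/
def aVHat : Equiv.Perm C.VHat :=
  Equiv.Perm.subtypePerm C.aV (by
    intro v
    exact not_congr (inOrbit_apply C.aV C.im v))

/-- The induced automorphism on the ambient contracted edge type. -/
def aERaw : Equiv.Perm (C.E ⊕ (C.E × C.E) ⊕ (C.E × C.E)) :=
  Equiv.sumCongr C.aE (Equiv.sumCongr (Equiv.prodCongr C.aE C.aE) (Equiv.prodCongr C.aE C.aE))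

lemma pHat_aERaw (r : C.E ⊕ (C.E × C.E) ⊕ (C.E × C.E)) :
    C.PHat r ↔ C.PHat (C.aERaw r) := by
  rcases r with h | ⟨k, l⟩ | ⟨k, l⟩
  · simp only [aERaw, Equiv.sumCongr_apply, Sum.map_inl, PHat, C.comm_src, C.comm_tgt,
      inOrbit_apply]
  · simp only [aERaw, Equiv.sumCongr_apply, Sum.map_inr, Sum.map_inl, Prod.map_apply,
      Equiv.prodCongr_apply, PHat, isHK, inOrbit, C.comm_src, C.comm_tgt]
    constructor
    · rintro ⟨⟨n, hn⟩, h2⟩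
      exact ⟨⟨1 + n, by rw [zpow_add, Equiv.Perm.mul_apply, hn, zpow_one]⟩, by rw [h2]⟩
    · rintro ⟨⟨n, hn⟩, h2⟩
      refine ⟨⟨-1 + n, ?_⟩, C.aV.injective h2⟩
      have hh : (C.aE ^ (-1 + n : ℤ)) C.e0 = C.aE⁻¹ ((C.aE ^ n) C.e0) := by
        rw [zpow_add, Equiv.Perm.mul_apply, zpow_neg_one]
      rw [hh, hn, ← Equiv.Perm.mul_apply, inv_mul_cancel, Equiv.Perm.one_apply]
  · simp only [aERaw, Equiv.sumCongr_apply, Sum.map_inr, Prod.map_apply,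
      Equiv.prodCongr_apply, PHat, isHK, inOrbit, C.comm_tgt]
    constructor
    · rintro ⟨⟨n, hn⟩, h2, h3⟩
      refine ⟨⟨1 + n, by rw [zpow_add, Equiv.Perm.mul_apply, hn, zpow_one]⟩, by rw [h2],
        fun hc => h3 (C.aE.injective hc)⟩
    · rintro ⟨⟨n, hn⟩, h2, h3⟩
      refine ⟨⟨-1 + n, ?_⟩, C.aV.injective h2, fun hc => h3 (by rw [hc])⟩
      have hh : (C.aE ^ (-1 + n : ℤ)) C.e0 = C.aE⁻¹ ((C.aE ^ n) C.e0) := by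
        rw [zpow_add, Equiv.Perm.mul_apply, zpow_neg_one]
      rw [hh, hn, ← Equiv.Perm.mul_apply, inv_mul_cancel, Equiv.Perm.one_apply]

/-- The edge part of the induced automorphism `â`. -/
def aEHat : Equiv.Perm C.EHat :=
  Equiv.Perm.subtypePerm C.aERaw (fun r => (C.pHat_aERaw r).symm)

lemma srcHat_aEHat (r : C.EHat) : C.srcHat (C.aEHat r) = C.aVHat (C.srcHat r) := by
  rcases r with ⟨h | ⟨k, l⟩ | ⟨k, l⟩, pf⟩
  · exact Subtype.ext (C.comm_src h)
  · exact Subtype.ext (C.comm_src k)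
  · exact Subtype.ext (C.comm_src l)

lemma tgtHat_aEHat (r : C.EHat) : C.tgtHat (C.aEHat r) = C.aVHat (C.tgtHat r) := by
  rcases r with ⟨h | ⟨k, l⟩ | ⟨k, l⟩, pf⟩
  · exact Subtype.ext (C.comm_tgt h)
  · exact Subtype.ext (C.comm_tgt l)
  · exact Subtype.ext (C.comm_src k)

/-- The contracted graph `(𝐈̂, Ω̂)` with its induced automorphism `â`. -/
def GHat : PreGraph where
  V := C.VHat
  E := C.EHat
  nonemptyV := inferInstance
  src := C.srcHat
  tgt := C.tgtHat
  aV := C.aVHat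
  aE := C.aEHat
  comm_src := C.srcHat_aEHat
  comm_tgt := C.tgtHat_aEHat

end CSetup

/-- `K`, an algebraic closure of `𝔽_p`. -/
abbrev Kp (p : ℕ) [Fact p.Prime] : Type := AlgebraicClosure (ZMod p)

/-- An `a`-invariant dimension vector, i.e. an element of `ℕ[I]`, `I = 𝐈/a`. -/
structure DimVec (Q : PreGraph) where
  d : Q.V → ℕ
  inv : ∀ v, d (Q.aV v) = d v

namespace DimVec

/-- The sum of two dimension vectors. -/
def add {Q : PreGraph} (A B : DimVec Q) : DimVec Q :=
  ⟨fun v => A.d v + B.d v, fun v =>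
    show A.d (Q.aV v) + B.d (Q.aV v) = A.d v + B.d v by rw [A.inv, B.inv]⟩

lemma inv_zpow {Q : PreGraph} (D : DimVec Q) (n : ℤ) (v : Q.V) :
    D.d ((Q.aV ^ n) v) = D.d v := by
  induction n using Int.induction_on generalizing v with
  | zero => simp
  | succ k ih => rw [zpow_add_one, Equiv.Perm.mul_apply, ih, D.inv]
  | pred k ih =>
      rw [zpow_sub_one, Equiv.Perm.mul_apply, ih]
      have := D.inv (Q.aV⁻¹ v)
      rw [← Equiv.Perm.mul_apply, mul_inv_cancel, Equiv.Perm.one_apply] at this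
      exact this.symm

end DimVec

section RepTheory

variable (p e : ℕ) [Fact p.Prime] (Q : PreGraph) (D : DimVec Q)

/-- The representation space `E_𝐕 = ⊕_{h ∈ Ω} Hom(𝐕_{h′}, 𝐕_{h″})`, in the fixed bases. -/
def RepSp : Type :=
  ∀ h : Q.E, Matrix (Fin (D.d (Q.tgt h))) (Fin (D.d (Q.src h))) (Kp p)

/-- The group `G_𝐕 = ∏_{𝐢} GL(𝐕_𝐢)`. -/
def GGr : Type := ∀ v : Q.V, GL (Fin (D.d v)) (Kp p)

instance : Group (GGr p Q D) := by unfold GGr; infer_instance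

/-- The conjugation action `(g·x)_h = g_{h″} x_h g_{h′}^{-1}` of `G_𝐕` on `E_𝐕`. -/
def actE (g : GGr p Q D) (x : RepSp p Q D) : RepSp p Q D :=
  fun h => (g (Q.tgt h)).val * x h * ((g (Q.src h))⁻¹).val

/-- The twisted Frobenius `𝐅 = Fr ∘ a` on the representation space: `(𝐅x)_h` is obtained
from `x_{a(h)}` by raising all matrix entries to the `q = pᵉ`-th power (transported along
the identifications `𝐕_{a(𝐢)} = 𝐕_𝐢` coming from the compatible `a`-action in the fixed
bases). -/
def TwFE (x : RepSp p Q D) : RepSp p Q D := fun h =>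
  fun i j =>
    (x (Q.aE h)
      (finCongr (show D.d (Q.tgt h) = D.d (Q.tgt (Q.aE h)) by rw [Q.comm_tgt, D.inv]) i)
      (finCongr (show D.d (Q.src h) = D.d (Q.src (Q.aE h)) by rw [Q.comm_src, D.inv]) j))
    ^ (p ^ e)

/-- The `q = pᵉ`-power Frobenius of `K`. -/
def frobHom : Kp p →+* Kp p := iterateFrobenius (Kp p) p e

/-- The twisted Frobenius on `G_𝐕`. -/
def TwFG (g : GGr p Q D) : GGr p Q D := fun v =>
  Units.mapEquiv
    (Matrix.reindexAlgEquiv (Kp p) (Kp p)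
      (finCongr (show D.d (Q.aV v) = D.d v from D.inv v))).toMulEquiv
    (Units.map (RingHom.toMonoidHom (frobHom p e).mapMatrix) (g (Q.aV v)))

end RepTheory

section Blocks

variable (p e : ℕ) [Fact p.Prime] (Q : PreGraph) (Dt Dw : DimVec Q)

/-- `S_𝐖 ⊆ E_𝐕`: the representations leaving the graded subspace `𝐖` (spanned by the last
`ω` basis vectors in each graded piece, `𝐕 = 𝐓 ⊕ 𝐖`) invariant, i.e. those whose
`(𝐓-row, 𝐖-column)` block vanishes. -/
def SWSet : Set (RepSp p Q (Dt.add Dw)) :=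
  {x | ∀ (h : Q.E) (i : Fin (Dt.d (Q.tgt h))) (j : Fin (Dw.d (Q.src h))),
    x h (Fin.castAdd _ i) (Fin.natAdd _ j) = 0}

/-- `x ↦ x^𝐓`, the induced representation on `𝐓 ≅ 𝐕/𝐖` (the upper-left block). -/
def blockT (x : RepSp p Q (Dt.add Dw)) : RepSp p Q Dt :=
  fun h i j => x h (Fin.castAdd _ i) (Fin.castAdd _ j)

/-- `x ↦ x^𝐖`, the restricted representation on `𝐖` (the lower-right block). -/
def blockW (x : RepSp p Q (Dt.add Dw)) : RepSp p Q Dw :=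
  fun h i j => x h (Fin.natAdd _ i) (Fin.natAdd _ j)

end Blocks

section Contraction

variable (p e : ℕ) [Fact p.Prime] (C : CSetup) (D : DimVec C.toPreGraph)

/-- The heart locus `E_𝐕^♥ = {x : x_{h_k} is an isomorphism for all k}`. -/
def heartSet : Set (RepSp p C.toPreGraph D) :=
  {x | ∀ k : C.E, C.isHK k → Function.Bijective (Matrix.mulVecLin (x k))}

/-- A dimension vector is balanced when `ν_{[i₊]} = ν_{[i₋]}`, i.e. it lies in `ℕ[Î]`. -/
def DimVec.bal : Prop := D.d C.ip = D.d C.im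

/-- The dimension vector induced on the contracted graph. -/
def DimVec.hat : DimVec C.GHat :=
  ⟨fun v => D.d v.1, fun v => D.inv v.1⟩

variable {p C D}

/-- Multiplication of rectangular matrices after recasting the inner index (used for the
composite edges of the contracted graph; the sizes agree in all relevant cases). -/
def castMul {a b c d : ℕ} (A : Matrix (Fin a) (Fin b) (Kp p)) (B : Matrix (Fin c) (Fin d) (Kp p)) :
    Matrix (Fin a) (Fin d) (Kp p) :=
  if h : b = c then A * B.submatrix (⇑(finCongr h)) id else 0

/-- The inverse of a rectangular matrix of square shape (used for `x_{h_k}^{-1}`; the two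
sizes agree in all relevant cases). -/
def invSq {a b : ℕ} (M : Matrix (Fin a) (Fin b) (Kp p)) : Matrix (Fin b) (Fin a) (Kp p) :=
  if h : a = b then ((M.submatrix (⇑(finCongr h.symm)) id)⁻¹).submatrix id (⇑(finCongr h))
  else 0

variable (p C D)

/-- The contraction map `μ_ν : E_𝐕 → E_𝐕̂`, `x ↦ x̂`:  `x̂_h = x_h` for old edges,
`x̂_{l₁h_k} = x_{l₁} x_{h_k}` and `x̂_{h̄_k l₂} = x_{h_k}^{-1} x_{l₂}` for composite edges. -/
def muE (x : RepSp p C.toPreGraph D) : RepSp p C.GHat (D.hat C)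
  | ⟨Sum.inl h, _⟩ => x h
  | ⟨Sum.inr (Sum.inl (k, l)), _⟩ => castMul (x l) (x k)
  | ⟨Sum.inr (Sum.inr (k, l)), _⟩ => castMul (invSq (x k)) (x l)

end Contraction

section Hall

open scoped Classical

variable (p e : ℕ) [Fact p.Prime]

/-- The field `ℚ(q^{1/2})`, realized as the subfield of `ℝ` generated by `√q`, `q = pᵉ`. -/
def FF : Subfield ℝ := Subfield.closure {Real.sqrt (p ^ e)}

/-- The element `q^{1/2} ∈ ℚ(q^{1/2})`. -/
def sqq : FF p e := ⟨Real.sqrt (p ^ e), Subfield.subset_closure rfl⟩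

variable (Q : PreGraph) (D : DimVec Q)

/-- The space `H_{ν,Ω}` of `G_𝐕^𝐅`-invariant `ℚ(q^{1/2})`-valued functions on `E_𝐕^𝐅`
(realized as functions on `E_𝐕` vanishing off the twisted Frobenius fixed points and
invariant under the fixed subgroup). -/
def HallSet : Set (RepSp p Q D → FF p e) :=
  {f | (∀ x, TwFE p e Q D x ≠ x → f x = 0) ∧
       (∀ g x, TwFG p e Q D g = g → f (actE p Q D g x) = f x)}

/-- The number of elements of `G_𝐕^𝐅`. -/
def GFcard : ℕ := Nat.card {g : GGr p Q D // TwFG p e Q D g = g}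

variable (Dt Dw : DimVec Q)

/-- The weight `m_Ω(τ,ω) = Σ_{𝐢∈𝐈} τ_𝐢 ω_𝐢 + Σ_{h∈Ω} τ_{h′} ω_{h″}`. -/
def mWt : ℤ :=
  (∑ᶠ v : Q.V, (Dt.d v * Dw.d v : ℤ)) + ∑ᶠ h : Q.E, (Dt.d (Q.src h) * Dw.d (Q.tgt h) : ℤ)

/-- Membership in the unipotent radical `U` of the stabilizer `Q` of `𝐖`, intersected with
the twisted Frobenius fixed subgroup: block shape `[[1,0],[*,1]]`. -/
def uMem (u : GGr p Q (Dt.add Dw)) : Prop :=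
  TwFG p e Q (Dt.add Dw) u = u ∧
  ∀ v : Q.V,
    (∀ i j : Fin (Dt.d v), (u v).val (Fin.castAdd _ i) (Fin.castAdd _ j)
      = if i = j then 1 else 0) ∧
    (∀ (i : Fin (Dt.d v)) (j : Fin (Dw.d v)),
      (u v).val (Fin.castAdd _ i) (Fin.natAdd _ j) = 0) ∧
    (∀ i j : Fin (Dw.d v), (u v).val (Fin.natAdd _ i) (Fin.natAdd _ j)
      = if i = j then 1 else 0)

/-- Membership in the parabolic stabilizer `Q` of `𝐖` (block lower triangular), intersected
with the twisted Frobenius fixed subgroup. -/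
def qMem (b : GGr p Q (Dt.add Dw)) : Prop :=
  TwFG p e Q (Dt.add Dw) b = b ∧
  ∀ (v : Q.V) (i : Fin (Dt.d v)) (j : Fin (Dw.d v)),
    (b v).val (Fin.castAdd _ i) (Fin.natAdd _ j) = 0

/-- The pairs `(g, x) ∈ G_𝐕^𝐅 × S_𝐖^𝐅` with `x` in the prescribed locus
(`locus = E_𝐕` for the plain induction diagram, `locus = E_𝐕^♥` for its ♥-version). -/
def goodPair (locus : Set (RepSp p Q (Dt.add Dw))) (c : GGr p Q (Dt.add Dw) × RepSp p Q (Dt.add Dw)) : Prop :=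
  TwFG p e Q (Dt.add Dw) c.1 = c.1 ∧ TwFE p e Q (Dt.add Dw) c.2 = c.2 ∧
    c.2 ∈ SWSet p Q Dt Dw ∧ c.2 ∈ locus

/-- The relation whose classes are the `U^𝐅`-orbits on `G_𝐕^𝐅 × S_𝐖^𝐅`
(`b·(g,x) = (g b^{-1}, b·x)`). -/
def relU (locus : Set (RepSp p Q (Dt.add Dw)))
    (c d : GGr p Q (Dt.add Dw) × RepSp p Q (Dt.add Dw)) : Prop :=
  goodPair p e Q Dt Dw locus c ∧
    ∃ u, uMem p e Q Dt Dw u ∧ d.1 = c.1 * u⁻¹ ∧ d.2 = actE p Q (Dt.add Dw) u c.2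

/-- The relation whose classes are the `Q^𝐅`-orbits on `G_𝐕^𝐅 × S_𝐖^𝐅`. -/
def relQ (locus : Set (RepSp p Q (Dt.add Dw)))
    (c d : GGr p Q (Dt.add Dw) × RepSp p Q (Dt.add Dw)) : Prop :=
  goodPair p e Q Dt Dw locus c ∧
    ∃ b, qMem p e Q Dt Dw b ∧ d.1 = c.1 * b⁻¹ ∧ d.2 = actE p Q (Dt.add Dw) b c.2

/-- `𝐄′ = (G_𝐕 × S_𝐖)/U` on twisted Frobenius fixed points. -/
def Eprime (locus : Set (RepSp p Q (Dt.add Dw))) : Type :=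
  Quot (relU p e Q Dt Dw locus)

/-- `𝐄″ = (G_𝐕 × S_𝐖)/Q` on twisted Frobenius fixed points. -/
def Edouble (locus : Set (RepSp p Q (Dt.add Dw))) : Type :=
  Quot (relQ p e Q Dt Dw locus)

variable {locus : Set (RepSp p Q (Dt.add Dw))}

/-- A class represented by a pair in `G_𝐕^𝐅 × S_𝐖^𝐅` (with `x` in the locus). -/
def goodClU (c : Eprime p e Q Dt Dw locus) : Prop :=
  ∃ a, Quot.mk _ a = c ∧ goodPair p e Q Dt Dw locus a

/-- A class represented by a pair in `G_𝐕^𝐅 × S_𝐖^𝐅` (with `x` in the locus). -/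
def goodClQ (c : Edouble p e Q Dt Dw locus) : Prop :=
  ∃ a, Quot.mk _ a = c ∧ goodPair p e Q Dt Dw locus a

/-- `p₁ : 𝐄′ → E_𝐓 × E_𝐖`, `[g,x]_U ↦ (x^𝐓, x^𝐖)`. -/
def pOne (c : Eprime p e Q Dt Dw locus) : RepSp p Q Dt × RepSp p Q Dw :=
  (blockT p Q Dt Dw (Quot.out c).2, blockW p Q Dt Dw (Quot.out c).2)

/-- `p₂ : 𝐄′ → 𝐄″`, `[g,x]_U ↦ [g,x]_Q`. -/
def pTwo (c : Eprime p e Q Dt Dw locus) : Edouble p e Q Dt Dw locus :=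
  Quot.mk _ (Quot.out c)

/-- `p₃ : 𝐄″ → E_𝐕`, `[g,x]_Q ↦ g·x`. -/
def pThree (c : Edouble p e Q Dt Dw locus) : RepSp p Q (Dt.add Dw) :=
  actE p Q (Dt.add Dw) (Quot.out c).1 (Quot.out c).2

/-- `(p₃)_! (p₂)_! (p₁)^* (f ⊗ g)`. -/
def indRaw (f : RepSp p Q Dt → FF p e) (g : RepSp p Q Dw → FF p e)
    (x : RepSp p Q (Dt.add Dw)) : FF p e :=
  ∑ᶠ (c : Edouble p e Q Dt Dw locus) (_ : pThree p e Q Dt Dw c = x),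
    ∑ᶠ (d : Eprime p e Q Dt Dw locus) (_ : pTwo p e Q Dt Dw d = c),
      f (pOne p e Q Dt Dw d).1 * g (pOne p e Q Dt Dw d).2

variable (locus)

/-- The induction product
`Ind^ν_{τ,ω} = (q^{1/2})^{−m_Ω(τ,ω)} (#(G_𝐓^𝐅 × G_𝐖^𝐅))^{-1} (p₃)_!(p₂)_!(p₁)^*` of the
Hall algebra, built from the induction diagram over the locus. -/
def Ind (f : RepSp p Q Dt → FF p e) (g : RepSp p Q Dw → FF p e) :
    RepSp p Q (Dt.add Dw) → FF p e :=
  fun x => (sqq p e) ^ (-(mWt Q Dt Dw)) *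
    ((GFcard p e Q Dt : FF p e) * (GFcard p e Q Dw : FF p e))⁻¹ *
    indRaw p e Q Dt Dw (locus := locus) f g x

end Hall

section MuJ

open scoped Classical

variable (p e : ℕ) [Fact p.Prime] (C : CSetup) (D : DimVec C.toPreGraph)

/-- `E_𝐕^{♥,𝐅}`: the twisted Frobenius fixed points of the heart locus. -/
def heartF : Set (RepSp p C.toPreGraph D) :=
  {x | TwFE p e C.toPreGraph D x = x ∧ x ∈ heartSet p C D}

/-- `H^♥_{ν,Ω}`: the `G_𝐕^𝐅`-invariant functions on `E_𝐕^{♥,𝐅}` (realized as functions on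
`E_𝐕` vanishing off `E_𝐕^{♥,𝐅}`). -/
def HallSetH : Set (RepSp p C.toPreGraph D → FF p e) :=
  {f | (∀ x, x ∉ heartF p e C D → f x = 0) ∧
       (∀ g x, TwFG p e C.toPreGraph D g = g → f (actE p C.toPreGraph D g x) = f x)}

/-- `H^c_{ν,Ω}`: the invariant functions on `E_𝐕^𝐅` vanishing on `E_𝐕^{♥,𝐅}`, i.e. those
supported on the complement `E_𝐕^{c,𝐅}`. -/
def HallSetC : Set (RepSp p C.toPreGraph D → FF p e) :=
  {f | f ∈ HallSet p e C.toPreGraph D ∧ ∀ x ∈ heartSet p C D, f x = 0}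

/-- `j_!` (extension by zero from `E_𝐕^{♥,𝐅}` to `E_𝐕^𝐅`), and likewise the restriction
map `j^*` of functions (in this ambient model both are given by truncation to the heart
locus). -/
def jOp (f : RepSp p C.toPreGraph D → FF p e) : RepSp p C.toPreGraph D → FF p e :=
  fun x => if x ∈ heartF p e C D then f x else 0

/-- The pullback `μ_ν^*` along the contraction map `μ_ν : E_𝐕^{♥,𝐅} → E_𝐕̂^{𝐅̂}`,
`f ↦ f ∘ μ_ν` (realized ambiently, vanishing off `E_𝐕^{♥,𝐅}`). -/
def muPull (f : RepSp p C.GHat (D.hat C) → FF p e) : RepSp p C.toPreGraph D → FF p e :=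
  fun x => if x ∈ heartF p e C D then f (muE p C D x) else 0

/-- `φ₁(i₋) = #[𝐢₋]`. -/
def phiIm : ℕ := Nat.card {v : C.V // inOrbit C.aV C.im v}

/-- `φ₁(i₊) = #[𝐢₊]`. -/
def phiIp : ℕ := Nat.card {v : C.V // inOrbit C.aV C.ip v}

/-- The twisted pullback `μ_ν^⋆ = (q^{-1/2})^{ν_{i₋}² φ₁(i₋)} μ_ν^*`. -/
def muStar (f : RepSp p C.GHat (D.hat C) → FF p e) : RepSp p C.toPreGraph D → FF p e :=
  fun x => (sqq p e) ^ (-((D.d C.im : ℤ) ^ 2 * (phiIm C : ℤ))) * muPull p e C D f x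

/-- The projection `G_𝐕 → G_𝐕̂` forgetting the `[𝐢₋]`-components. -/
def projG (g : GGr p C.toPreGraph D) : GGr p C.GHat (D.hat C) := fun v => g v.1

/-- The subgroup `G_𝐕^{[𝐢₋]} = ∏_{𝐢 ∈ [𝐢₋]} GL(𝐕_𝐢) ⊆ G_𝐕`, intersected with the twisted
Frobenius fixed subgroup. -/
def GimSet : Set (GGr p C.toPreGraph D) :=
  {g | TwFG p e C.toPreGraph D g = g ∧ ∀ v, ¬ inOrbit C.aV C.im v → g v = 1}

/-- The characteristic function `ζ_𝒪` of the `G_𝐕^𝐅`-orbit of a point `x₀`. -/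
def zetaOrb (x0 : RepSp p C.toPreGraph D) : RepSp p C.toPreGraph D → FF p e :=
  fun y => if ∃ g, TwFG p e C.toPreGraph D g = g ∧ actE p C.toPreGraph D g x0 = y then 1 else 0

/-- The characteristic function of the `G_𝐕̂^{𝐅̂}`-orbit of a point of `E_𝐕̂^{𝐅̂}`. -/
def zetaOrbHat (z0 : RepSp p C.GHat (D.hat C)) : RepSp p C.GHat (D.hat C) → FF p e :=
  fun z => if ∃ g, TwFG p e C.GHat (D.hat C) g = g ∧ actE p C.GHat (D.hat C) g z0 = z
    then 1 else 0

end MuJ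

section Diag

variable {p : ℕ} [Fact p.Prime]

/-- The block diagonal invertible matrix `diag(A, B)`. -/
def glFromBlocks {m n : ℕ} (A : GL (Fin m) (Kp p)) (B : GL (Fin n) (Kp p)) :
    GL (Fin (m + n)) (Kp p) where
  val := (Matrix.fromBlocks A.val 0 0 B.val).submatrix
    (⇑finSumFinEquiv.symm) (⇑finSumFinEquiv.symm)
  inv := (Matrix.fromBlocks (A⁻¹).val 0 0 (B⁻¹).val).submatrix
    (⇑finSumFinEquiv.symm) (⇑finSumFinEquiv.symm)
  val_inv := by
    rw [Matrix.submatrix_mul_equiv _ _ _ finSumFinEquiv.symm _]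
    have h1 : A.val * (A⁻¹).val = 1 := by rw [← Units.val_mul, mul_inv_cancel, Units.val_one]
    have h2 : B.val * (B⁻¹).val = 1 := by rw [← Units.val_mul, mul_inv_cancel, Units.val_one]
    simp only [Matrix.fromBlocks_multiply, Matrix.mul_zero, Matrix.zero_mul, add_zero,
      zero_add]
    rw [h1, h2, Matrix.fromBlocks_one]
    exact Matrix.submatrix_one_equiv finSumFinEquiv.symm
  inv_val := by
    rw [Matrix.submatrix_mul_equiv _ _ _ finSumFinEquiv.symm _]
    have h1 : (A⁻¹).val * A.val = 1 := by rw [← Units.val_mul, inv_mul_cancel, Units.val_one]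
    have h2 : (B⁻¹).val * B.val = 1 := by rw [← Units.val_mul, inv_mul_cancel, Units.val_one]
    simp only [Matrix.fromBlocks_multiply, Matrix.mul_zero, Matrix.zero_mul, add_zero,
      zero_add]
    rw [h1, h2, Matrix.fromBlocks_one]
    exact Matrix.submatrix_one_equiv finSumFinEquiv.symm

/-- The block diagonal embedding `G_𝐓 × G_𝐖 → G_𝐕`. -/
def embedDiag {Q : PreGraph} {Dt Dw : DimVec Q} (s : GGr p Q Dt) (t : GGr p Q Dw) :
    GGr p Q (Dt.add Dw) :=
  fun v => glFromBlocks (s v) (t v)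

end Diag

section QuotMaps

/-- The map on quotients induced by the identity (e.g. the inclusions `𝐄′^{♥,𝐅} → 𝐄′^𝐅`,
`𝐄″^{♥,𝐅} → 𝐄″^𝐅`, and `p₂`-type maps), defined on representatives. -/
def quotMap {α : Sort*} (r s : α → α → Prop) : Quot r → Quot s :=
  fun c => Quot.mk s (Quot.out c)

variable (p e : ℕ) [Fact p.Prime] (C : CSetup) (Dt Dw : DimVec C.toPreGraph)

/-- `(g, x) ↦ (ĝ, μ_ν(x))` on pairs. -/
def pairProjHat
    (c : GGr p C.toPreGraph (Dt.add Dw) × RepSp p C.toPreGraph (Dt.add Dw)) :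
    GGr p C.GHat ((Dt.hat C).add (Dw.hat C)) × RepSp p C.GHat ((Dt.hat C).add (Dw.hat C)) :=
  (projG p C (Dt.add Dw) c.1, muE p C (Dt.add Dw) c.2)

/-- The map `μ′_ν : 𝐄′^{♥,𝐅} → 𝐄̂′^{𝐅̂}` induced by the contraction map and the projection
`G_𝐕 → G_𝐕̂`. -/
def muEprime :
    Eprime p e C.toPreGraph Dt Dw (heartSet p C (Dt.add Dw)) →
      Eprime p e C.GHat (Dt.hat C) (Dw.hat C) Set.univ :=
  fun c => Quot.mk _ (pairProjHat p C Dt Dw (Quot.out c))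

/-- The map `μ″_ν : 𝐄″^{♥,𝐅} → 𝐄̂″^{𝐅̂}`. -/
def muEdouble :
    Edouble p e C.toPreGraph Dt Dw (heartSet p C (Dt.add Dw)) →
      Edouble p e C.GHat (Dt.hat C) (Dw.hat C) Set.univ :=
  fun c => Quot.mk _ (pairProjHat p C Dt Dw (Quot.out c))

end QuotMaps

/-! Every square of the diagram is checked edge by edge on matrices. In bases adapted to
`𝐕 = 𝐓 ⊕ 𝐖`, `S_𝐖` consists of the representations all of whose matrices are block lower
triangular. Such matrices are closed under products and, when invertible, under inversion, and
the diagonal blocks of a product or an inverse are the products or inverses of the diagonal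
blocks; moreover a block lower triangular matrix is invertible iff both diagonal blocks are.
Since the composite edges of the contracted graph carry `x_{l₁} x_{h_k}` and `x_{h_k}⁻¹ x_{l₂}`,
this gives the two bottom squares and the Cartesian top-right square. The twisted Frobenius acts
on entries (after reindexing along `a`), so it commutes with taking blocks and with the
contraction map. -/

namespace Matrix

variable {R : Type*}

/-- `M` maps the span of the last `b'` basis vectors into the span of the last `a'` ones. -/
def IsBlockLower [Zero R] {a a' b b' : ℕ} (M : Matrix (Fin (a + a')) (Fin (b + b')) R) : Prop :=
  ∀ i j, M (Fin.castAdd a' i) (Fin.natAdd b j) = 0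

section Semiring

variable [NonUnitalNonAssocSemiring R] {a a' b b' c c' : ℕ}
  {X : Matrix (Fin (a + a')) (Fin (b + b')) R} {Y : Matrix (Fin (b + b')) (Fin (c + c')) R}

theorem IsBlockLower.mul (hX : X.IsBlockLower) (hY : Y.IsBlockLower) : (X * Y).IsBlockLower := by
  intro i j
  simp [mul_apply, Fin.sum_univ_add, hX i, hY _ j]

theorem IsBlockLower.submatrix_castAdd_mul (hX : X.IsBlockLower) :
    (X * Y).submatrix (Fin.castAdd a') (Fin.castAdd c') =
      X.submatrix (Fin.castAdd a') (Fin.castAdd b') *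
        Y.submatrix (Fin.castAdd b') (Fin.castAdd c') := by
  ext i j
  simp [mul_apply, Fin.sum_univ_add, hX i]

theorem IsBlockLower.submatrix_natAdd_mul (hY : Y.IsBlockLower) :
    (X * Y).submatrix (Fin.natAdd a) (Fin.natAdd c) =
      X.submatrix (Fin.natAdd a) (Fin.natAdd b) *
        Y.submatrix (Fin.natAdd b) (Fin.natAdd c) := by
  ext i j
  simp [mul_apply, Fin.sum_univ_add, hY _ j]

end Semiring

section CommRing

variable [CommRing R] {a b : ℕ} {M : Matrix (Fin (a + b)) (Fin (a + b)) R}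

theorem IsBlockLower.submatrix_finSumFinEquiv (hM : M.IsBlockLower) :
    M.submatrix finSumFinEquiv finSumFinEquiv =
      fromBlocks (M.submatrix (Fin.castAdd b) (Fin.castAdd b)) 0
        (M.submatrix (Fin.natAdd a) (Fin.castAdd b))
        (M.submatrix (Fin.natAdd a) (Fin.natAdd a)) := by
  ext (i | i) (j | j)
  all_goals simp
  exact hM i j

theorem IsBlockLower.isUnit_iff (hM : M.IsBlockLower) :
    IsUnit M ↔ IsUnit (M.submatrix (Fin.castAdd b) (Fin.castAdd b)) ∧
      IsUnit (M.submatrix (Fin.natAdd a) (Fin.natAdd a)) := by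
  rw [← isUnit_submatrix_equiv finSumFinEquiv finSumFinEquiv, hM.submatrix_finSumFinEquiv,
    isUnit_fromBlocks_zero₁₂]

theorem IsBlockLower.inv_submatrix_finSumFinEquiv (hM : M.IsBlockLower) (hu : IsUnit M) :
    M⁻¹.submatrix finSumFinEquiv finSumFinEquiv =
      fromBlocks (M.submatrix (Fin.castAdd b) (Fin.castAdd b))⁻¹ 0
        (-((M.submatrix (Fin.natAdd a) (Fin.natAdd a))⁻¹ *
          M.submatrix (Fin.natAdd a) (Fin.castAdd b) *
          (M.submatrix (Fin.castAdd b) (Fin.castAdd b))⁻¹))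
        (M.submatrix (Fin.natAdd a) (Fin.natAdd a))⁻¹ := by
  obtain ⟨hA, hD⟩ := hM.isUnit_iff.mp hu
  rw [← inv_submatrix_equiv, hM.submatrix_finSumFinEquiv,
    inv_fromBlocks_zero₁₂_of_isUnit_iff _ _ _ (iff_of_true hA hD)]

theorem IsBlockLower.inv (hM : M.IsBlockLower) (hu : IsUnit M) : M⁻¹.IsBlockLower := by
  intro i j
  simpa using congrFun (congrFun (hM.inv_submatrix_finSumFinEquiv hu) (.inl i)) (.inr j)

theorem IsBlockLower.submatrix_castAdd_inv (hM : M.IsBlockLower) (hu : IsUnit M) :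
    M⁻¹.submatrix (Fin.castAdd b) (Fin.castAdd b) =
      (M.submatrix (Fin.castAdd b) (Fin.castAdd b))⁻¹ := by
  ext i j
  simpa using congrFun (congrFun (hM.inv_submatrix_finSumFinEquiv hu) (.inl i)) (.inl j)

theorem IsBlockLower.submatrix_natAdd_inv (hM : M.IsBlockLower) (hu : IsUnit M) :
    M⁻¹.submatrix (Fin.natAdd a) (Fin.natAdd a) =
      (M.submatrix (Fin.natAdd a) (Fin.natAdd a))⁻¹ := by
  ext i j
  simpa using congrFun (congrFun (hM.inv_submatrix_finSumFinEquiv hu) (.inr i)) (.inr j)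

end CommRing

theorem bijective_mulVecLin_iff_isUnit {K n : Type*} [Field K] [Fintype n] [DecidableEq n]
    {A : Matrix n n K} : Function.Bijective A.mulVecLin ↔ IsUnit A :=
  ⟨fun h => mulVec_injective_iff_isUnit.mp h.1,
    fun h => ⟨mulVec_injective_iff_isUnit.mpr h, mulVec_surjective_iff_isUnit.mpr h⟩⟩

theorem IsBlockLower.bijective_mulVecLin_iff {K : Type*} [Field K] {a a' b b' : ℕ}
    {X : Matrix (Fin (a + a')) (Fin (b + b')) K} (hb : b = a) (hb' : b' = a')
    (hX : X.IsBlockLower) :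
    Function.Bijective X.mulVecLin ↔
      Function.Bijective (X.submatrix (Fin.castAdd a') (Fin.castAdd b')).mulVecLin ∧
        Function.Bijective (X.submatrix (Fin.natAdd a) (Fin.natAdd b)).mulVecLin := by
  subst hb hb'
  simp only [bijective_mulVecLin_iff_isUnit, hX.isUnit_iff]

theorem map_inv {K L n : Type*} [Field K] [Field L] [Fintype n] [DecidableEq n] (f : K →+* L)
    (A : Matrix n n K) : A⁻¹.map f = (A.map f)⁻¹ := by
  have hdet : (A.map f).det = f A.det := (f.map_det A).symm
  have hadj : (A.map f).adjugate = A.adjugate.map f := (f.map_adjugate A).symm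
  rw [inv_def, inv_def, Ring.inverse_eq_inv', Ring.inverse_eq_inv', hdet, hadj, ← map_inv₀]
  ext i j
  simp

end Matrix

section CastMul

open Matrix

variable {p : ℕ} [Fact p.Prime]

theorem castMul_eq_mul {a b c : ℕ} (M : Matrix (Fin a) (Fin b) (Kp p))
    (N : Matrix (Fin b) (Fin c) (Kp p)) : castMul M N = M * N := by
  simp [castMul]

theorem invSq_eq_inv {a : ℕ} (M : Matrix (Fin a) (Fin a) (Kp p)) : invSq M = M⁻¹ := by
  simp [invSq]

theorem castMul_map (f : Kp p →+* Kp p) {a b c d : ℕ} (M : Matrix (Fin a) (Fin b) (Kp p))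
    (N : Matrix (Fin c) (Fin d) (Kp p)) :
    (castMul M N).map f = castMul (M.map f) (N.map f) := by
  unfold castMul
  split_ifs
  · rw [submatrix_map, ← Matrix.map_mul]
  · exact Matrix.map_zero _ (map_zero f)

theorem invSq_map (f : Kp p →+* Kp p) {a b : ℕ} (M : Matrix (Fin a) (Fin b) (Kp p)) :
    (invSq M).map f = invSq (M.map f) := by
  unfold invSq
  split_ifs
  · rw [submatrix_map, ← submatrix_map, Matrix.map_inv]
  · exact Matrix.map_zero _ (map_zero f)

theorem castMul_submatrix_finCongr {a b c d a' b' c' d' : ℕ}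
    (ha : a = a') (hb : b = b') (hc : c = c') (hd : d = d')
    (M : Matrix (Fin a') (Fin b') (Kp p)) (N : Matrix (Fin c') (Fin d') (Kp p)) :
    castMul (M.submatrix (finCongr ha) (finCongr hb)) (N.submatrix (finCongr hc) (finCongr hd)) =
      (castMul M N).submatrix (finCongr ha) (finCongr hd) := by
  subst ha hb hc hd
  simp

theorem invSq_submatrix_finCongr {a b a' b' : ℕ} (ha : a = a') (hb : b = b')
    (M : Matrix (Fin a') (Fin b') (Kp p)) :
    invSq (M.submatrix (finCongr ha) (finCongr hb)) =
      (invSq M).submatrix (finCongr hb) (finCongr ha) := by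
  subst ha hb
  simp

variable {a a' b b' c c' d d' : ℕ}
  {X : Matrix (Fin (a + a')) (Fin (b + b')) (Kp p)}
  {Y : Matrix (Fin (c + c')) (Fin (d + d')) (Kp p)}

theorem isBlockLower_castMul (hc : b = c) (hc' : b' = c') (hX : X.IsBlockLower)
    (hY : Y.IsBlockLower) : (castMul X Y).IsBlockLower := by
  subst hc hc'
  rw [castMul_eq_mul]
  exact hX.mul hY

theorem castMul_submatrix_castAdd (hc : b = c) (hc' : b' = c') (hX : X.IsBlockLower) :
    (castMul X Y).submatrix (Fin.castAdd a') (Fin.castAdd d') =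
      castMul (X.submatrix (Fin.castAdd a') (Fin.castAdd b'))
        (Y.submatrix (Fin.castAdd c') (Fin.castAdd d')) := by
  subst hc hc'
  rw [castMul_eq_mul, castMul_eq_mul, hX.submatrix_castAdd_mul]

theorem castMul_submatrix_natAdd (hc : b = c) (hc' : b' = c') (hY : Y.IsBlockLower) :
    (castMul X Y).submatrix (Fin.natAdd a) (Fin.natAdd d) =
      castMul (X.submatrix (Fin.natAdd a) (Fin.natAdd b))
        (Y.submatrix (Fin.natAdd c) (Fin.natAdd d)) := by
  subst hc hc'
  rw [castMul_eq_mul, castMul_eq_mul, hY.submatrix_natAdd_mul]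

theorem isBlockLower_invSq (hb : b = a) (hb' : b' = a') (hX : X.IsBlockLower)
    (hu : Function.Bijective X.mulVecLin) : (invSq X).IsBlockLower := by
  subst hb hb'
  rw [invSq_eq_inv]
  exact hX.inv (bijective_mulVecLin_iff_isUnit.mp hu)

theorem invSq_submatrix_castAdd (hb : b = a) (hb' : b' = a') (hX : X.IsBlockLower)
    (hu : Function.Bijective X.mulVecLin) :
    (invSq X).submatrix (Fin.castAdd b') (Fin.castAdd a') =
      invSq (X.submatrix (Fin.castAdd a') (Fin.castAdd b')) := by
  subst hb hb'
  rw [invSq_eq_inv, invSq_eq_inv, hX.submatrix_castAdd_inv (bijective_mulVecLin_iff_isUnit.mp hu)]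

theorem invSq_submatrix_natAdd (hb : b = a) (hb' : b' = a') (hX : X.IsBlockLower)
    (hu : Function.Bijective X.mulVecLin) :
    (invSq X).submatrix (Fin.natAdd b) (Fin.natAdd a) =
      invSq (X.submatrix (Fin.natAdd a) (Fin.natAdd b)) := by
  subst hb hb'
  rw [invSq_eq_inv, invSq_eq_inv, hX.submatrix_natAdd_inv (bijective_mulVecLin_iff_isUnit.mp hu)]

end CastMul

section TwistedFrobenius

variable {p e : ℕ} [Fact p.Prime]

theorem DimVec.d_tgt_aE {Q : PreGraph} (D : DimVec Q) (h : Q.E) :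
    D.d (Q.tgt h) = D.d (Q.tgt (Q.aE h)) := by
  rw [Q.comm_tgt, D.inv]

theorem DimVec.d_src_aE {Q : PreGraph} (D : DimVec Q) (h : Q.E) :
    D.d (Q.src h) = D.d (Q.src (Q.aE h)) := by
  rw [Q.comm_src, D.inv]

theorem TwFE_apply (Q : PreGraph) (D : DimVec Q) (x : RepSp p Q D) (h : Q.E) :
    TwFE p e Q D x h =
      ((x (Q.aE h)).submatrix (finCongr (D.d_tgt_aE h)) (finCongr (D.d_src_aE h))).map
        (frobHom p e) := by
  ext i j
  simp [TwFE, frobHom, iterateFrobenius_def]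

variable {Q : PreGraph} {Dt Dw : DimVec Q}

theorem TwFE_blockT (x : RepSp p Q (Dt.add Dw)) :
    TwFE p e Q Dt (blockT p Q Dt Dw x) = blockT p Q Dt Dw (TwFE p e Q (Dt.add Dw) x) :=
  rfl

theorem TwFE_blockW (x : RepSp p Q (Dt.add Dw)) :
    TwFE p e Q Dw (blockW p Q Dt Dw x) = blockW p Q Dt Dw (TwFE p e Q (Dt.add Dw) x) := by
  funext h i j
  simp only [TwFE, blockW]
  congr 2 <;> ext <;> simp [Q.comm_tgt, Q.comm_src, Dt.inv] <;> rfl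

theorem TwFE_muE {C : CSetup} {D : DimVec C.toPreGraph} (x : RepSp p C.toPreGraph D) :
    TwFE p e C.GHat (D.hat C) (muE p C D x) = muE p C D (TwFE p e C.toPreGraph D x) := by
  funext eh
  rw [TwFE_apply]
  obtain ⟨h | ⟨k, l⟩ | ⟨k, l⟩, pf⟩ := eh
  · exact (TwFE_apply _ _ x h).symm
  · show _ = castMul (TwFE p e C.toPreGraph D x l) (TwFE p e C.toPreGraph D x k)
    rw [TwFE_apply, TwFE_apply, ← castMul_map, castMul_submatrix_finCongr]
    rfl
  · show _ = castMul (invSq (TwFE p e C.toPreGraph D x k)) (TwFE p e C.toPreGraph D x l)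
    rw [TwFE_apply, TwFE_apply, ← invSq_map, ← castMul_map, invSq_submatrix_finCongr,
      castMul_submatrix_finCongr]
    rfl

end TwistedFrobenius

section Contraction

variable {p : ℕ} [Fact p.Prime] {C : CSetup}

theorem DimVec.d_src_eq_d_tgt_of_isHK {D : DimVec C.toPreGraph} (hD : D.bal C) {k : C.E}
    (hk : C.isHK k) : D.d (C.src k) = D.d (C.tgt k) := by
  obtain ⟨n, hn⟩ := C.hk_src hk
  obtain ⟨m, hm⟩ := C.hk_tgt hk
  rw [← hn, ← hm, D.inv_zpow, D.inv_zpow]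
  exact hD

variable {Dt Dw : DimVec C.toPreGraph} {x : RepSp p C.toPreGraph (Dt.add Dw)}

theorem mem_heartSet_add_iff (hbt : Dt.bal C) (hbw : Dw.bal C)
    (hx : x ∈ SWSet p C.toPreGraph Dt Dw) :
    x ∈ heartSet p C (Dt.add Dw) ↔
      blockT p C.toPreGraph Dt Dw x ∈ heartSet p C Dt ∧
        blockW p C.toPreGraph Dt Dw x ∈ heartSet p C Dw := by
  simp only [heartSet, Set.mem_ofPred_eq, ← forall_and]
  refine forall₂_congr fun k hk => ?_
  exact Matrix.IsBlockLower.bijective_mulVecLin_iff (Dt.d_src_eq_d_tgt_of_isHK hbt hk)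
    (Dw.d_src_eq_d_tgt_of_isHK hbw hk) (hx k)

theorem muE_mem_SWSet (hbt : Dt.bal C) (hbw : Dw.bal C) (hx : x ∈ SWSet p C.toPreGraph Dt Dw)
    (hheart : x ∈ heartSet p C (Dt.add Dw)) :
    muE p C (Dt.add Dw) x ∈ SWSet p C.GHat (Dt.hat C) (Dw.hat C) := by
  rintro ⟨h | ⟨k, l⟩ | ⟨k, l⟩, pf⟩
  · exact hx h
  · exact isBlockLower_castMul (congrArg Dt.d pf.2) (congrArg Dw.d pf.2) (hx l) (hx k)
  · exact isBlockLower_castMul (congrArg Dt.d pf.2.1).symm (congrArg Dw.d pf.2.1).symm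
      (isBlockLower_invSq (Dt.d_src_eq_d_tgt_of_isHK hbt pf.1)
        (Dw.d_src_eq_d_tgt_of_isHK hbw pf.1) (hx k) (hheart k pf.1)) (hx l)

theorem blockT_muE (hbt : Dt.bal C) (hbw : Dw.bal C) (hx : x ∈ SWSet p C.toPreGraph Dt Dw)
    (hheart : x ∈ heartSet p C (Dt.add Dw)) :
    blockT p C.GHat (Dt.hat C) (Dw.hat C) (muE p C (Dt.add Dw) x) =
      muE p C Dt (blockT p C.toPreGraph Dt Dw x) := by
  funext eh
  obtain ⟨h | ⟨k, l⟩ | ⟨k, l⟩, pf⟩ := eh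
  · rfl
  · exact castMul_submatrix_castAdd (congrArg Dt.d pf.2) (congrArg Dw.d pf.2) (hx l)
  · have hT := Dt.d_src_eq_d_tgt_of_isHK hbt pf.1
    have hW := Dw.d_src_eq_d_tgt_of_isHK hbw pf.1
    exact (castMul_submatrix_castAdd (congrArg Dt.d pf.2.1).symm (congrArg Dw.d pf.2.1).symm
      (isBlockLower_invSq hT hW (hx k) (hheart k pf.1))).trans
      (congrArg (castMul · _) (invSq_submatrix_castAdd hT hW (hx k) (hheart k pf.1)))

theorem blockW_muE (hbt : Dt.bal C) (hbw : Dw.bal C) (hx : x ∈ SWSet p C.toPreGraph Dt Dw)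
    (hheart : x ∈ heartSet p C (Dt.add Dw)) :
    blockW p C.GHat (Dt.hat C) (Dw.hat C) (muE p C (Dt.add Dw) x) =
      muE p C Dw (blockW p C.toPreGraph Dt Dw x) := by
  funext eh
  obtain ⟨h | ⟨k, l⟩ | ⟨k, l⟩, pf⟩ := eh
  · rfl
  · exact castMul_submatrix_natAdd (congrArg Dt.d pf.2) (congrArg Dw.d pf.2) (hx k)
  · have hT := Dt.d_src_eq_d_tgt_of_isHK hbt pf.1
    have hW := Dw.d_src_eq_d_tgt_of_isHK hbw pf.1
    exact (castMul_submatrix_natAdd (congrArg Dt.d pf.2.1).symm (congrArg Dw.d pf.2.1).symm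
      (hx l)).trans
      (congrArg (castMul · _) (invSq_submatrix_natAdd hT hW (hx k) (hheart k pf.1)))

end Contraction

theorem stmt7_general (p e : ℕ) [Fact p.Prime] (C : CSetup)
    (Dt Dw : DimVec C.toPreGraph) (hbt : Dt.bal C) (hbw : Dw.bal C) :
    -- `κ` is compatible with the twisted Frobenii (so the top rows are well defined)
    (∀ x, TwFE p e C.toPreGraph (Dt.add Dw) x = x →
      x ∈ SWSet p C.toPreGraph Dt Dw →
        TwFE p e C.toPreGraph Dt (blockT p C.toPreGraph Dt Dw x)
            = blockT p C.toPreGraph Dt Dw x ∧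
        TwFE p e C.toPreGraph Dw (blockW p C.toPreGraph Dt Dw x)
            = blockW p C.toPreGraph Dt Dw x) ∧
    -- top-left square Cartesian:
    -- `S_𝐖^{♥,𝐅}` is the fiber product of `S_𝐖^𝐅` and `E_𝐕^{♥,𝐅}` over `E_𝐕^𝐅`
    ({x | (TwFE p e C.toPreGraph (Dt.add Dw) x = x ∧ x ∈ SWSet p C.toPreGraph Dt Dw) ∧
        x ∈ heartSet p C (Dt.add Dw)}
      = {x | TwFE p e C.toPreGraph (Dt.add Dw) x = x ∧ x ∈ SWSet p C.toPreGraph Dt Dw}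
        ∩ heartF p e C (Dt.add Dw)) ∧
    -- top-right square Cartesian:  `S_𝐖^{♥,𝐅}` is the fiber product of `S_𝐖^𝐅` and
    -- `E_𝐓^{♥,𝐅} × E_𝐖^{♥,𝐅}` over `E_𝐓^𝐅 × E_𝐖^𝐅`
    (∀ x, TwFE p e C.toPreGraph (Dt.add Dw) x = x → x ∈ SWSet p C.toPreGraph Dt Dw →
      (x ∈ heartSet p C (Dt.add Dw) ↔
        blockT p C.toPreGraph Dt Dw x ∈ heartSet p C Dt ∧
        blockW p C.toPreGraph Dt Dw x ∈ heartSet p C Dw)) ∧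
    -- bottom-left square commutes: `μ_ν` restricts to
    -- `μ′_ν : S_𝐖^{♥,𝐅} → S_𝐖̂^{𝐅̂}`
    (∀ x, TwFE p e C.toPreGraph (Dt.add Dw) x = x → x ∈ SWSet p C.toPreGraph Dt Dw →
      x ∈ heartSet p C (Dt.add Dw) →
        muE p C (Dt.add Dw) x ∈ SWSet p C.GHat (Dt.hat C) (Dw.hat C) ∧
        TwFE p e C.GHat ((Dt.add Dw).hat C) (muE p C (Dt.add Dw) x)
          = muE p C (Dt.add Dw) x) ∧
    -- bottom-right square commutes: `κ̂ (μ′_ν x) = (μ_τ (x^𝐓), μ_ω (x^𝐖))`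
    (∀ x, TwFE p e C.toPreGraph (Dt.add Dw) x = x → x ∈ SWSet p C.toPreGraph Dt Dw →
      x ∈ heartSet p C (Dt.add Dw) →
        blockT p C.GHat (Dt.hat C) (Dw.hat C) (muE p C (Dt.add Dw) x)
            = muE p C Dt (blockT p C.toPreGraph Dt Dw x) ∧
        blockW p C.GHat (Dt.hat C) (Dw.hat C) (muE p C (Dt.add Dw) x)
            = muE p C Dw (blockW p C.toPreGraph Dt Dw x)) := by
  refine ⟨fun x hx _ => ⟨?_, ?_⟩, ?_, fun x _ hsw => mem_heartSet_add_iff hbt hbw hsw,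
    fun x hx hsw hheart => ⟨muE_mem_SWSet hbt hbw hsw hheart, ?_⟩,
    fun x _ hsw hheart => ⟨blockT_muE hbt hbw hsw hheart, blockW_muE hbt hbw hsw hheart⟩⟩
  · rw [TwFE_blockT, hx]
  · rw [TwFE_blockW, hx]
  · ext x
    simp only [heartF, Set.mem_ofPred_eq, Set.mem_inter_iff]
    tauto
  · rw [TwFE_muE, hx]

/-- In the extended restriction diagram on twisted Frobenius fixed points,
with rows `(E_𝐕^𝐅 ← S_𝐖^𝐅 → E_𝐓^𝐅 × E_𝐖^𝐅)`, its ♥-restriction, and the contracted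
version, with upward vertical maps the inclusions `j` and downward vertical maps the
contraction maps `μ`, all four squares commute and the two top squares are Cartesian squares
of sets.  In this ambient model (`S ⊆ E_𝐕`, `κ = (blockT, blockW)`, `j` = inclusions of
subsets):  the maps `κ` and `μ` are compatible with the twisted Frobenii;  the top-left
square is Cartesian, i.e. `S_𝐖^{♥,𝐅} = S_𝐖^𝐅 ∩ E_𝐕^{♥,𝐅}`;  the top-right square is
Cartesian, i.e. for `x ∈ S_𝐖^𝐅`, `x` is in the heart locus iff `x^𝐓` and `x^𝐖` are;
the bottom-left square commutes, i.e. `μ` maps `S_𝐖^{♥,𝐅}` into `S_𝐖̂^{𝐅̂}`;  and the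
bottom-right square commutes, i.e. `κ̂ ∘ μ′_ν = (μ_τ × μ_ω) ∘ κ^♥`. -/
theorem stmt7 (p e : ℕ) [Fact p.Prime] (he : 0 < e) (C : CSetup)
    (Dt Dw : DimVec C.toPreGraph) (hbt : Dt.bal C) (hbw : Dw.bal C) :
    -- `κ` is compatible with the twisted Frobenii (so the top rows are well defined)
    (∀ x, TwFE p e C.toPreGraph (Dt.add Dw) x = x →
      x ∈ SWSet p C.toPreGraph Dt Dw →
        TwFE p e C.toPreGraph Dt (blockT p C.toPreGraph Dt Dw x)
            = blockT p C.toPreGraph Dt Dw x ∧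
        TwFE p e C.toPreGraph Dw (blockW p C.toPreGraph Dt Dw x)
            = blockW p C.toPreGraph Dt Dw x) ∧
    -- top-left square Cartesian:
    -- `S_𝐖^{♥,𝐅}` is the fiber product of `S_𝐖^𝐅` and `E_𝐕^{♥,𝐅}` over `E_𝐕^𝐅`
    ({x | (TwFE p e C.toPreGraph (Dt.add Dw) x = x ∧ x ∈ SWSet p C.toPreGraph Dt Dw) ∧
        x ∈ heartSet p C (Dt.add Dw)}
      = {x | TwFE p e C.toPreGraph (Dt.add Dw) x = x ∧ x ∈ SWSet p C.toPreGraph Dt Dw}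
        ∩ heartF p e C (Dt.add Dw)) ∧
    -- top-right square Cartesian:  `S_𝐖^{♥,𝐅}` is the fiber product of `S_𝐖^𝐅` and
    -- `E_𝐓^{♥,𝐅} × E_𝐖^{♥,𝐅}` over `E_𝐓^𝐅 × E_𝐖^𝐅`
    (∀ x, TwFE p e C.toPreGraph (Dt.add Dw) x = x → x ∈ SWSet p C.toPreGraph Dt Dw →
      (x ∈ heartSet p C (Dt.add Dw) ↔
        blockT p C.toPreGraph Dt Dw x ∈ heartSet p C Dt ∧
        blockW p C.toPreGraph Dt Dw x ∈ heartSet p C Dw)) ∧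
    -- bottom-left square commutes: `μ_ν` restricts to
    -- `μ′_ν : S_𝐖^{♥,𝐅} → S_𝐖̂^{𝐅̂}`
    (∀ x, TwFE p e C.toPreGraph (Dt.add Dw) x = x → x ∈ SWSet p C.toPreGraph Dt Dw →
      x ∈ heartSet p C (Dt.add Dw) →
        muE p C (Dt.add Dw) x ∈ SWSet p C.GHat (Dt.hat C) (Dw.hat C) ∧
        TwFE p e C.GHat ((Dt.add Dw).hat C) (muE p C (Dt.add Dw) x)
          = muE p C (Dt.add Dw) x) ∧
    -- bottom-right square commutes: `κ̂ (μ′_ν x) = (μ_τ (x^𝐓), μ_ω (x^𝐖))`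
    (∀ x, TwFE p e C.toPreGraph (Dt.add Dw) x = x → x ∈ SWSet p C.toPreGraph Dt Dw →
      x ∈ heartSet p C (Dt.add Dw) →
        blockT p C.GHat (Dt.hat C) (Dw.hat C) (muE p C (Dt.add Dw) x)
            = muE p C Dt (blockT p C.toPreGraph Dt Dw x) ∧
        blockW p C.GHat (Dt.hat C) (Dw.hat C) (muE p C (Dt.add Dw) x)
            = muE p C Dw (blockW p C.toPreGraph Dt Dw x)) :=
  stmt7_general p e C Dt Dw hbt hbw
end
end
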